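/- For every parallel critical pair s ≈ t of the transformed TRS R̄ there exist a constrained parallel critical pair s′ ≈ t′ [φ′] of the LCTRS R and a substitution γ such that s = s′γ, t = t′γ and γ ⊨ φ′. -/

import Mathlib

namespace LCT

/-! ### First-order terms over signature `F` with natural-number variables -/

inductive Term (F : Type) : Type
  | var : ℕ → Term F
  | app : F → List (Term F) → Term F

instance {F : Type} : Inhabited (Term F) := ⟨Term.var 0⟩

namespace Term

variable {F : Type}

/-- Application of a substitution (total map from variables to terms). -/
def subst (σ : ℕ → Term F) : Term F → Term F
  | var x => σ x
  | app f ts => app f (ts.attach.map fun ⟨t, _⟩ => subst σ t)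

/-- The list of (occurrences of) variables of a term. -/
def varsList : Term F → List ℕ
  | var x => [x]
  | app _ ts => (ts.attach.map fun ⟨t, _⟩ => varsList t).flatten

/-- The set of variables of a term. -/
def vars (t : Term F) : Set ℕ := {x | x ∈ t.varsList}

/-- Number of occurrences of the variable `x` in a term. -/
def count (x : ℕ) : Term F → ℕ
  | var y => if y = x then 1 else 0
  | app _ ts => (ts.attach.map fun ⟨t, _⟩ => count x t).sum

/-- The subterm at a position (a position is a list of argument indices). -/
def subtermAt : Term F → List ℕ → Option (Term F)
  | t, [] => some t
  | var _, _ :: _ => none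
  | app _ ts, i :: p => match ts[i]? with
    | some t => subtermAt t p
    | none => none

/-- Replacement of the subterm at a position. -/
def replaceAt : Term F → List ℕ → Term F → Option (Term F)
  | _, [], u => some u
  | var _, _ :: _, _ => none
  | app f ts, i :: p, u => match ts[i]? with
    | some t => match replaceAt t p u with
      | some t' => some (app f (ts.set i t'))
      | none => none
    | none => none

/-- Renaming of variables. -/
def rename (π : ℕ → ℕ) (t : Term F) : Term F := t.subst (fun x => var (π x))

/-- The term is not a variable (i.e. its root is a function symbol). -/
def isFun : Term F → Prop
  | var _ => False
  | app _ _ => True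

end Term

/-- Simultaneous replacement at a list of (parallel) positions. -/
def replaceAll {F : Type} : Term F → List (List ℕ × Term F) → Option (Term F)
  | t, [] => some t
  | t, (p, u) :: rest => match t.replaceAt p u with
    | some t' => replaceAll t' rest
    | none => none

/-- Two positions are parallel if neither is a prefix of the other. -/
def ParallelPos (p q : List ℕ) : Prop := ¬ p <+: q ∧ ¬ q <+: p

/-- Prefix every position in the `i`-th member of `Qs` with `i` and collect the results. -/
def posJoin (Qs : List (List (List ℕ))) : List (List ℕ) :=
  (Qs.zipIdx.map fun qi => qi.1.map (qi.2 :: ·)).flatten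

/-- The domain of a substitution. -/
def Dom {F : Type} (σ : ℕ → Term F) : Set ℕ := {x | σ x ≠ Term.var x}

/-! ### Abstract rewriting notions -/

/-- Confluence of an abstract relation. -/
def Confluent {α : Type*} (r : α → α → Prop) : Prop :=
  ∀ s t u, Relation.ReflTransGen r s t → Relation.ReflTransGen r s u →
    ∃ v, Relation.ReflTransGen r t v ∧ Relation.ReflTransGen r u v

/-- Local confluence of an abstract relation. -/
def LocallyConfluent {α : Type*} (r : α → α → Prop) : Prop :=
  ∀ s t u, r s t → r s u →
    ∃ v, Relation.ReflTransGen r t v ∧ Relation.ReflTransGen r u v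

/-- Composition of relations. -/
def Comp {α : Type*} (r s : α → α → Prop) : α → α → Prop := fun a c => ∃ b, r a b ∧ s b c

/-! ### Constrained rewrite rules and LCTRSs -/

/-- A constrained rewrite rule `ℓ → r [φ]`. -/
structure Rule (F : Type) where
  lhs : Term F
  rhs : Term F
  cond : Term F

/-- The logical variables `LVar(ρ) = Var(φ) ∪ (Var(r) ∖ Var(ℓ))` of a rule. -/
def LVar {F : Type} (ρ : Rule F) : Set ℕ := ρ.cond.vars ∪ (ρ.rhs.vars \ ρ.lhs.vars)

/-- `EVar(ρ) = Var(r) ∖ (Var(ℓ) ∪ Var(φ))`, as a list. -/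
def EVarList {F : Type} (ρ : Rule F) : List ℕ :=
  ρ.rhs.varsList.filter fun x => !(ρ.lhs.varsList.contains x || ρ.cond.varsList.contains x)

/-- All variables of a rule. -/
def ruleVars {F : Type} (ρ : Rule F) : Set ℕ := ρ.lhs.vars ∪ ρ.rhs.vars ∪ ρ.cond.vars

/-- Terms all of whose function symbols are theory symbols (logical terms). -/
inductive IsLogical {F : Type} (Fth : Set F) : Term F → Prop
  | var (x : ℕ) : IsLogical Fth (.var x)
  | app {f ts} : f ∈ Fth → (∀ t ∈ ts, IsLogical Fth t) → IsLogical Fth (.app f ts)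

/-- A logically constrained term rewrite system (data part): a signature split into
term symbols `Fte` and theory symbols `Fth` with value constants `Val`, an arity
function, an interpretation `J` of ground logical terms, distinguished symbols
`tt` (the truth value ⊤), `andS` (conjunction) and `eqS` (equality), and a set
of constrained rewrite rules. -/
structure LCTRS (F : Type) where
  Fte : Set F
  Fth : Set F
  Val : Set F
  arity : F → ℕ
  J : Term F → F
  tt : F
  andS : F
  eqS : F
  rules : Set (Rule F)

namespace LCTRS

variable {F : Type}

/-- The term `t` is a value. -/
def isVal (R : LCTRS F) (t : Term F) : Prop := ∃ v ∈ R.Val, t = Term.app v []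

/-- `γ` assigns values to all variables in `S`. -/
def valAssign (R : LCTRS F) (S : Set ℕ) (γ : ℕ → Term F) : Prop := ∀ x ∈ S, R.isVal (γ x)

/-- A ground term (no variables). -/
def Ground (t : Term F) : Prop := t.varsList = []

/-- Validity of a constraint: `J(φγ) = ⊤` for every assignment of values to its variables. -/
def validC (R : LCTRS F) (φ : Term F) : Prop :=
  ∀ γ, R.valAssign φ.vars γ → R.J (φ.subst γ) = R.tt

/-- Satisfiability of a constraint. -/
def satC (R : LCTRS F) (φ : Term F) : Prop :=
  ∃ γ, R.valAssign φ.vars γ ∧ R.J (φ.subst γ) = R.tt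

/-- `γ ⊨ φ`: the substitution `γ` respects the constraint `φ`. -/
def respectsC (R : LCTRS F) (γ : ℕ → Term F) (φ : Term F) : Prop :=
  R.valAssign φ.vars γ ∧ R.validC (φ.subst γ)

/-- `σ ⊨ ρ`: the substitution `σ` respects the constrained rule `ρ`. -/
def respectsRule (R : LCTRS F) (σ : ℕ → Term F) (ρ : Rule F) : Prop :=
  Dom σ = ρ.lhs.vars ∪ ρ.rhs.vars ∪ ρ.cond.vars ∧
  (∀ x ∈ LVar ρ, R.isVal (σ x)) ∧ R.validC (ρ.cond.subst σ)

/-- Validity of the implication `φ ⇒ ψ`. -/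
def validImp (R : LCTRS F) (φ ψ : Term F) : Prop :=
  ∀ γ, R.valAssign (φ.vars ∪ ψ.vars) γ → R.J (φ.subst γ) = R.tt → R.J (ψ.subst γ) = R.tt

/-- The calculation rule `f(x₁,…,xₙ) → y [y = f(x₁,…,xₙ)]` for a theory symbol `f`. -/
def calcRule (R : LCTRS F) (f : F) : Rule F :=
  let xs : List (Term F) := (List.range (R.arity f)).map Term.var
  ⟨Term.app f xs, Term.var (R.arity f),
    Term.app R.eqS [Term.var (R.arity f), Term.app f xs]⟩

/-- `R_rc`: the rules of `R` together with all calculation rules. -/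
def Rrc (R : LCTRS F) : Set (Rule F) :=
  R.rules ∪ {ρ | ∃ f ∈ R.Fth \ R.Val, ρ = R.calcRule f}

/-- The conjunction `a ∧ b` as a logical term. -/
def conj (R : LCTRS F) (a b : Term F) : Term F := Term.app R.andS [a, b]

/-- The truth constant `⊤` as a logical term. -/
def trueT (R : LCTRS F) : Term F := Term.app R.tt []

/-- Conjunction of a list of constraints. -/
def bigConj (R : LCTRS F) (l : List (Term F)) : Term F := l.foldr R.conj R.trueT

/-- `EC_ρ`: the conjunction of `x = x` for all `x ∈ EVar(ρ)`. -/
def EC (R : LCTRS F) (ρ : Rule F) : Term F :=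
  R.bigConj ((EVarList ρ).map fun x => Term.app R.eqS [Term.var x, Term.var x])

/-- Well-formedness of an LCTRS: the axioms on the signature, values,
interpretation, the distinguished logical symbols, and the rules. -/
def WF (R : LCTRS F) : Prop :=
  R.Val ⊆ R.Fth ∧ R.Fte ∩ R.Fth ⊆ R.Val ∧ (∀ ι ∈ R.Val, R.arity ι = 0) ∧
  (∀ t, R.J t ∈ R.Val) ∧ (∀ v ∈ R.Val, R.J (Term.app v []) = v) ∧
  R.tt ∈ R.Val ∧ R.andS ∈ R.Fth \ R.Val ∧ R.arity R.andS = 2 ∧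
  R.eqS ∈ R.Fth \ R.Val ∧ R.arity R.eqS = 2 ∧
  (∀ a b : Term F, IsLogical R.Fth a → IsLogical R.Fth b → Ground a → Ground b →
    (R.J (R.conj a b) = R.tt ↔ (R.J a = R.tt ∧ R.J b = R.tt))) ∧
  (∀ a b : Term F, IsLogical R.Fth a → IsLogical R.Fth b → Ground a → Ground b →
    (R.J (Term.app R.eqS [a, b]) = R.tt ↔ R.J a = R.J b)) ∧
  (∀ ρ ∈ R.rules, (∃ f ts, ρ.lhs = Term.app f ts ∧ f ∈ R.Fte \ R.Fth) ∧
    IsLogical R.Fth ρ.cond)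

/-! ### Rewriting induced by an LCTRS -/

/-- One rewrite step at position `p`. -/
def rstepAt (R : LCTRS F) (p : List ℕ) (s t : Term F) : Prop :=
  ∃ ρ ∈ R.Rrc, ∃ σ, R.respectsRule σ ρ ∧
    s.subtermAt p = some (ρ.lhs.subst σ) ∧ s.replaceAt p (ρ.rhs.subst σ) = some t

/-- The rewrite relation `→_R`. -/
def rstep (R : LCTRS F) (s t : Term F) : Prop := ∃ p, R.rstepAt p s t

/-- A rewrite step at a position below (or equal to) `q`. -/
def rstepGe (R : LCTRS F) (q : List ℕ) (s t : Term F) : Prop :=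
  ∃ p, q <+: p ∧ R.rstepAt p s t

end LCTRS

/-! ### TRSs (unconstrained term rewrite systems) -/

/-- A TRS is a set of rules, i.e. pairs of terms. -/
abbrev TRS (F : Type) := Set (Term F × Term F)

/-- One rewrite step of a TRS at position `p`. -/
def tstepAt {F : Type} (S : TRS F) (p : List ℕ) (s t : Term F) : Prop :=
  ∃ lr ∈ S, ∃ σ : ℕ → Term F,
    s.subtermAt p = some (lr.1.subst σ) ∧ s.replaceAt p (lr.2.subst σ) = some t

/-- The rewrite relation of a TRS. -/
def tstep {F : Type} (S : TRS F) (s t : Term F) : Prop := ∃ p, tstepAt S p s t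

/-- A TRS is left-linear if no variable occurs twice in a left-hand side. -/
def LeftLinearTRS {F : Type} (S : TRS F) : Prop := ∀ lr ∈ S, ∀ x, lr.1.count x ≤ 1

/-! ### The transformed TRS `R̄` of an LCTRS -/

/-- The TRS `R̄`: all value instances `ℓτ → rτ` of constrained rules, together with
the calculation instances `f(v₁,…,vₙ) → J(f(v₁,…,vₙ))`. -/
def barTRS {F : Type} (R : LCTRS F) : TRS F :=
  {lr | ∃ ρ ∈ R.rules, ∃ τ : ℕ → Term F, Dom τ = LVar ρ ∧
      (∀ x ∈ LVar ρ, R.isVal (τ x)) ∧ R.validC (ρ.cond.subst τ) ∧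
      lr = (ρ.lhs.subst τ, ρ.rhs.subst τ)} ∪
  {lr | ∃ f ∈ R.Fth \ R.Val, ∃ vs : List F, vs.length = R.arity f ∧
      (∀ v ∈ vs, v ∈ R.Val) ∧
      lr = (Term.app f (vs.map fun v => Term.app v []),
            Term.app (R.J (Term.app f (vs.map fun v => Term.app v []))) [])}

/-! ### Generic multi-steps and parallel steps -/

/-- Generic multi-step relation over a set of constrained rules with a side
condition `Cond` on the rule and the matching substitution. -/
inductive MStepG {F : Type} (Rules : Set (Rule F)) (Cond : Rule F → (ℕ → Term F) → Prop) :
    Term F → Term F → Prop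
  | var (x : ℕ) : MStepG Rules Cond (.var x) (.var x)
  | app {f : F} {ss ts : List (Term F)} :
      List.Forall₂ (MStepG Rules Cond) ss ts → MStepG Rules Cond (.app f ss) (.app f ts)
  | rule {ρ : Rule F} {σ τ : ℕ → Term F} :
      ρ ∈ Rules → Cond ρ σ → (∀ x, MStepG Rules Cond (σ x) (τ x)) →
      MStepG Rules Cond (ρ.lhs.subst σ) (ρ.rhs.subst τ)

mutual
/-- Generic parallel rewriting, annotated with the list of (parallel) positions of
the contracted redexes; `Root` is the root-step relation. -/
inductive ParP {F : Type} (Root : Term F → Term F → Prop) :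
    List (List ℕ) → Term F → Term F → Prop
  | var (x : ℕ) : ParP Root [] (.var x) (.var x)
  | app {f : F} {Qs ss ts} : ParPs Root Qs ss ts →
      ParP Root (posJoin Qs) (.app f ss) (.app f ts)
  | rule {s t : Term F} : Root s t → ParP Root [[]] s t

inductive ParPs {F : Type} (Root : Term F → Term F → Prop) :
    List (List (List ℕ)) → List (Term F) → List (Term F) → Prop
  | nil : ParPs Root [] [] []
  | cons {Q s t Qs ss ts} : ParP Root Q s t → ParPs Root Qs ss ts →
      ParPs Root (Q :: Qs) (s :: ss) (t :: ts)
end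

/-- Root steps of a TRS. -/
def trootStep {F : Type} (S : TRS F) (s t : Term F) : Prop :=
  ∃ lr ∈ S, ∃ σ : ℕ → Term F, s = lr.1.subst σ ∧ t = lr.2.subst σ

/-- The parallel rewrite relation `⇉^Q` of a TRS. -/
def tparQ {F : Type} (S : TRS F) (Q : List (List ℕ)) : Term F → Term F → Prop :=
  ParP (trootStep S) Q

/-- The parallel rewrite relation `⇉` of a TRS. -/
def tpar {F : Type} (S : TRS F) (s t : Term F) : Prop := ∃ Q, tparQ S Q s t

/-- The multi-step relation `⊸→` of a TRS. -/
def tmstep {F : Type} (S : TRS F) : Term F → Term F → Prop :=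
  MStepG {ρ : Rule F | (ρ.lhs, ρ.rhs) ∈ S} (fun _ _ => True)

namespace LCTRS

variable {F : Type}

/-- Root steps of an LCTRS (on unconstrained terms). -/
def lrootStep (R : LCTRS F) (s t : Term F) : Prop :=
  ∃ ρ ∈ R.Rrc, ∃ σ, R.respectsRule σ ρ ∧ s = ρ.lhs.subst σ ∧ t = ρ.rhs.subst σ

/-- The parallel rewrite relation `⇉^Q` of an LCTRS on terms. -/
def lparQ (R : LCTRS F) (Q : List (List ℕ)) : Term F → Term F → Prop :=
  ParP R.lrootStep Q

/-- The parallel rewrite relation `⇉` of an LCTRS on terms. -/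
def lpar (R : LCTRS F) (s t : Term F) : Prop := ∃ Q, R.lparQ Q s t

/-- The multi-step relation `⊸→` of an LCTRS on terms. -/
def lmstep (R : LCTRS F) : Term F → Term F → Prop :=
  MStepG R.Rrc (fun ρ σ => R.respectsRule σ ρ)

/-! ### Constrained terms and rewriting on them -/

/-- Side condition for rewriting a constrained term with constraint `φ` using
rule `ρ` and substitution `σ`: `σ(x) ∈ Val ∪ Var(φ)` for logical variables,
`φ` is satisfiable and `φ ⇒ ψσ` is valid. -/
def ccond (R : LCTRS F) (φ : Term F) (ρ : Rule F) (σ : ℕ → Term F) : Prop :=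
  (∀ x ∈ LVar ρ, R.isVal (σ x) ∨ ∃ y ∈ φ.vars, σ x = Term.var y) ∧
  R.satC φ ∧ R.validImp φ (ρ.cond.subst σ)

/-- One step on a constrained term (the constraint `φ` is left unchanged) at position `p`. -/
def cstepAt (R : LCTRS F) (φ : Term F) (p : List ℕ) (s t : Term F) : Prop :=
  ∃ ρ ∈ R.Rrc, ∃ σ, R.ccond φ ρ σ ∧
    s.subtermAt p = some (ρ.lhs.subst σ) ∧ s.replaceAt p (ρ.rhs.subst σ) = some t

/-- A step on a constrained term at a position below (or equal to) `q`. -/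
def cstepGe (R : LCTRS F) (φ : Term F) (q : List ℕ) (s t : Term F) : Prop :=
  ∃ p, q <+: p ∧ R.cstepAt φ p s t

/-- Root steps on constrained terms with constraint `φ`. -/
def crootStep (R : LCTRS F) (φ : Term F) (s t : Term F) : Prop :=
  ∃ ρ ∈ R.Rrc, ∃ σ, R.ccond φ ρ σ ∧ s = ρ.lhs.subst σ ∧ t = ρ.rhs.subst σ

/-- The parallel relation `⇉^Q` on constrained terms (constraint unchanged). -/
def cparQ (R : LCTRS F) (φ : Term F) (Q : List (List ℕ)) : Term F → Term F → Prop :=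
  ParP (R.crootStep φ) Q

/-- The multi-step relation `⊸→` on constrained terms (constraint unchanged). -/
def cmstep (R : LCTRS F) (φ : Term F) : Term F → Term F → Prop :=
  MStepG R.Rrc (R.ccond φ)

/-- Equivalence `∼` of constrained terms (domains restricted to the constraint variables). -/
def simTerm (R : LCTRS F) (s φ t ψ : Term F) : Prop :=
  (∀ γ, R.respectsC γ φ → Dom γ = φ.vars →
    ∃ δ, R.respectsC δ ψ ∧ Dom δ = ψ.vars ∧ s.subst γ = t.subst δ) ∧
  (∀ δ, R.respectsC δ ψ → Dom δ = ψ.vars →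
    ∃ γ, R.respectsC γ φ ∧ Dom γ = φ.vars ∧ s.subst γ = t.subst δ)

/-- The equivalence `∼′` of constrained terms (unrestricted domains). -/
def simTerm' (R : LCTRS F) (s φ t ψ : Term F) : Prop :=
  (∀ γ, R.respectsC γ φ → ∃ δ, R.respectsC δ ψ ∧ s.subst γ = t.subst δ) ∧
  (∀ δ, R.respectsC δ ψ → ∃ γ, R.respectsC γ φ ∧ s.subst γ = t.subst δ)

end LCTRS

/-- A constrained pair `s ≈ t [φ]` (the constrained term with binary root `≈`). -/
abbrev CPair (F : Type) := Term F × Term F × Term F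

namespace LCTRS

variable {F : Type}

/-- Equivalence `∼` on constrained pairs `s ≈ t [φ]`. -/
def simPair (R : LCTRS F) (a b : CPair F) : Prop :=
  (∀ γ, R.respectsC γ a.2.2 → Dom γ = a.2.2.vars →
    ∃ δ, R.respectsC δ b.2.2 ∧ Dom δ = b.2.2.vars ∧
      a.1.subst γ = b.1.subst δ ∧ a.2.1.subst γ = b.2.1.subst δ) ∧
  (∀ δ, R.respectsC δ b.2.2 → Dom δ = b.2.2.vars →
    ∃ γ, R.respectsC γ a.2.2 ∧ Dom γ = a.2.2.vars ∧
      a.1.subst γ = b.1.subst δ ∧ a.2.1.subst γ = b.2.1.subst δ)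

/-- A raw rewrite step on the pair inside the first component, below position `1·q`. -/
def rawStepFstGe (R : LCTRS F) (q : List ℕ) (a b : CPair F) : Prop :=
  b.2.2 = a.2.2 ∧ b.2.1 = a.2.1 ∧ R.cstepGe a.2.2 q a.1 b.1

/-- A raw rewrite step on the pair inside the second component, below position `2·q`. -/
def rawStepSndGe (R : LCTRS F) (q : List ℕ) (a b : CPair F) : Prop :=
  b.2.2 = a.2.2 ∧ b.1 = a.1 ∧ R.cstepGe a.2.2 q a.2.1 b.2.1

/-- `~→_{≥1q}` on constrained pairs (`∼ · → · ∼`, step in the first component). -/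
def sstepFstGe (R : LCTRS F) (q : List ℕ) : CPair F → CPair F → Prop :=
  Comp R.simPair (Comp (R.rawStepFstGe q) R.simPair)

/-- `~→_{≥2q}` on constrained pairs (`∼ · → · ∼`, step in the second component). -/
def sstepSndGe (R : LCTRS F) (q : List ℕ) : CPair F → CPair F → Prop :=
  Comp R.simPair (Comp (R.rawStepSndGe q) R.simPair)

/-- A raw multi-step on the pair inside the first component. -/
def rawMStepFst (R : LCTRS F) (a b : CPair F) : Prop :=
  b.2.2 = a.2.2 ∧ b.2.1 = a.2.1 ∧ R.cmstep a.2.2 a.1 b.1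

/-- `~⊸→_{≥1}` on constrained pairs. -/
def smstepFst (R : LCTRS F) : CPair F → CPair F → Prop :=
  Comp R.simPair (Comp R.rawMStepFst R.simPair)

/-- A raw parallel step `⇉^P` on the pair inside the first component. -/
def rawParFst (R : LCTRS F) (P : List (List ℕ)) (a b : CPair F) : Prop :=
  b.2.2 = a.2.2 ∧ b.2.1 = a.2.1 ∧ R.cparQ a.2.2 P a.1 b.1

/-- A raw parallel step `⇉^Q` on the pair inside the second component. -/
def rawParSnd (R : LCTRS F) (Q : List (List ℕ)) (a b : CPair F) : Prop :=
  b.2.2 = a.2.2 ∧ b.1 = a.1 ∧ R.cparQ a.2.2 Q a.2.1 b.2.1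

/-- `~⇉_{≥1}^P` on constrained pairs. -/
def sparFst (R : LCTRS F) (P : List (List ℕ)) : CPair F → CPair F → Prop :=
  Comp R.simPair (Comp (R.rawParFst P) R.simPair)

/-- `~⇉_{≥2}^Q` on constrained pairs. -/
def sparSnd (R : LCTRS F) (Q : List (List ℕ)) : CPair F → CPair F → Prop :=
  Comp R.simPair (Comp (R.rawParSnd Q) R.simPair)

/-- A constrained pair `u ≈ v [ψ]` is trivial if `uσ = vσ` for every `σ ⊨ ψ`. -/
def TrivialC (R : LCTRS F) (u v ψ : Term F) : Prop :=
  ∀ σ, R.respectsC σ ψ → u.subst σ = v.subst σ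

end LCTRS

/-! ### Unification, variants, critical pairs -/

/-- `σ` unifies `s` and `t`. -/
def Unifies {F : Type} (σ : ℕ → Term F) (s t : Term F) : Prop := s.subst σ = t.subst σ

/-- `σ` is a most general unifier of `s` and `t`. -/
def IsMGU {F : Type} (σ : ℕ → Term F) (s t : Term F) : Prop :=
  Unifies σ s t ∧ ∀ θ, Unifies θ s t → ∃ δ, ∀ x, (σ x).subst δ = θ x

/-- `(ℓ₂, r₂)` is a variant (bijective renaming) of `(ℓ₁, r₁)`. -/
def IsVariantP {F : Type} (a b : Term F × Term F) : Prop :=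
  ∃ π : ℕ ≃ ℕ, b.1 = a.1.rename π ∧ b.2 = a.2.rename π

/-- `ρ₂` is a variant (bijective renaming) of the constrained rule `ρ₁`. -/
def IsVariantR {F : Type} (a b : Rule F) : Prop :=
  ∃ π : ℕ ≃ ℕ, b.lhs = a.lhs.rename π ∧ b.rhs = a.rhs.rename π ∧ b.cond = a.cond.rename π

/-- `s ≈ t` is a critical pair of the TRS `S` obtained from an overlap at position `p`. -/
def IsCPAt {F : Type} (S : TRS F) (p : List ℕ) (s t : Term F) : Prop :=
  ∃ (l₁ r₁ l₂ r₂ : Term F) (σ : ℕ → Term F) (l2p : Term F),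
    (∃ lr ∈ S, IsVariantP lr (l₁, r₁)) ∧
    (∃ lr ∈ S, IsVariantP lr (l₂, r₂)) ∧
    (l₁.vars ∪ r₁.vars) ∩ (l₂.vars ∪ r₂.vars) = ∅ ∧
    l₂.subtermAt p = some l2p ∧ l2p.isFun ∧
    IsMGU σ l₁ l2p ∧
    (p = [] → ¬ IsVariantP (l₁, r₁) (l₂, r₂)) ∧
    (l₂.subst σ).replaceAt p (r₁.subst σ) = some s ∧
    t = r₂.subst σ

/-- `s ≈ t [φc]` is a constrained critical pair of the LCTRS `R` obtained from an
overlap at position `p`. -/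
def IsCCPAt {F : Type} (R : LCTRS F) (p : List ℕ) (s t φc : Term F) : Prop :=
  ∃ (ρ₁ ρ₂ : Rule F) (σ : ℕ → Term F) (l2p : Term F),
    (∃ ρ ∈ R.Rrc, IsVariantR ρ ρ₁) ∧
    (∃ ρ ∈ R.Rrc, IsVariantR ρ ρ₂) ∧
    ruleVars ρ₁ ∩ ruleVars ρ₂ = ∅ ∧
    ρ₂.lhs.subtermAt p = some l2p ∧ l2p.isFun ∧
    IsMGU σ ρ₁.lhs l2p ∧
    (∀ x ∈ LVar ρ₁ ∪ LVar ρ₂, R.isVal (σ x) ∨ ∃ y, σ x = Term.var y) ∧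
    R.satC (R.conj (ρ₁.cond.subst σ) (ρ₂.cond.subst σ)) ∧
    (p = [] → ¬ IsVariantR ρ₁ ρ₂ ∨ ¬ (ρ₁.rhs.vars ⊆ ρ₁.lhs.vars)) ∧
    (ρ₂.lhs.subst σ).replaceAt p (ρ₁.rhs.subst σ) = some s ∧
    t = ρ₂.rhs.subst σ ∧
    φc = R.conj (ρ₁.cond.subst σ)
           (R.conj (ρ₂.cond.subst σ) ((R.conj (R.EC ρ₁) (R.EC ρ₂)).subst σ))

/-- `s ≈ t` is a parallel critical pair of the TRS `S`: `Ps` is the list of parallel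
overlap positions and `lsig` is the instantiated left-hand side `ℓσ`. -/
def IsPCP {F : Type} (S : TRS F) (Ps : List (List ℕ)) (lsig s t : Term F) : Prop :=
  ∃ (l r : Term F) (prs : List (List ℕ × Term F × Term F)) (σ : ℕ → Term F),
    Ps = prs.map (·.1) ∧ Ps ≠ [] ∧ Ps.Pairwise ParallelPos ∧
    (∃ lr ∈ S, IsVariantP lr (l, r)) ∧
    (∀ pr ∈ prs, ∃ lr ∈ S, IsVariantP lr pr.2) ∧
    prs.Pairwise (fun a b =>
      (a.2.1.vars ∪ a.2.2.vars) ∩ (b.2.1.vars ∪ b.2.2.vars) = ∅) ∧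
    (∀ pr ∈ prs, (l.vars ∪ r.vars) ∩ (pr.2.1.vars ∪ pr.2.2.vars) = ∅) ∧
    (∀ pr ∈ prs, ∃ u, l.subtermAt pr.1 = some u ∧ u.isFun) ∧
    (∀ pr ∈ prs, ∀ u, l.subtermAt pr.1 = some u → Unifies σ pr.2.1 u) ∧
    (∀ θ : ℕ → Term F, (∀ pr ∈ prs, ∀ u, l.subtermAt pr.1 = some u → Unifies θ pr.2.1 u) →
      ∃ δ, ∀ x, (σ x).subst δ = θ x) ∧
    (∀ lp rp, prs = [([], lp, rp)] → ¬ IsVariantP (lp, rp) (l, r)) ∧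
    lsig = l.subst σ ∧
    replaceAll lsig (prs.map fun pr => (pr.1, pr.2.2.subst σ)) = some s ∧
    t = r.subst σ

/-- `s ≈ t [Φ]` is a constrained parallel critical pair of the LCTRS `R`: `Ps` is the
list of parallel overlap positions and `lsig` is the instantiated left-hand side `ℓσ`. -/
def IsCPCP {F : Type} (R : LCTRS F) (Ps : List (List ℕ)) (lsig s t Φ : Term F) : Prop :=
  ∃ (ρ : Rule F) (prs : List (List ℕ × Rule F)) (σ : ℕ → Term F),
    Ps = prs.map (·.1) ∧ Ps ≠ [] ∧ Ps.Pairwise ParallelPos ∧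
    (∃ ρ' ∈ R.Rrc, IsVariantR ρ' ρ) ∧
    (∀ pr ∈ prs, ∃ ρ' ∈ R.Rrc, IsVariantR ρ' pr.2) ∧
    prs.Pairwise (fun a b => ruleVars a.2 ∩ ruleVars b.2 = ∅) ∧
    (∀ pr ∈ prs, ruleVars ρ ∩ ruleVars pr.2 = ∅) ∧
    (∀ pr ∈ prs, ∃ u, ρ.lhs.subtermAt pr.1 = some u ∧ u.isFun) ∧
    (∀ pr ∈ prs, ∀ u, ρ.lhs.subtermAt pr.1 = some u → Unifies σ pr.2.lhs u) ∧
    (∀ θ : ℕ → Term F,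
      (∀ pr ∈ prs, ∀ u, ρ.lhs.subtermAt pr.1 = some u → Unifies θ pr.2.lhs u) →
      ∃ δ, ∀ x, (σ x).subst δ = θ x) ∧
    (∀ x, (x ∈ LVar ρ ∨ ∃ pr ∈ prs, x ∈ LVar pr.2) →
      R.isVal (σ x) ∨ ∃ y, σ x = Term.var y) ∧
    R.satC (R.conj (ρ.cond.subst σ) (R.bigConj (prs.map fun pr => pr.2.cond.subst σ))) ∧
    (∀ ρε, prs = [([], ρε)] → ¬ IsVariantR ρε ρ ∨ ¬ (ρ.rhs.vars ⊆ ρ.lhs.vars)) ∧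
    lsig = ρ.lhs.subst σ ∧
    replaceAll lsig (prs.map fun pr => (pr.1, pr.2.rhs.subst σ)) = some s ∧
    t = ρ.rhs.subst σ ∧
    Φ = R.conj (ρ.cond.subst σ)
          (R.conj ((R.conj (R.EC ρ) (R.bigConj (prs.map fun pr => R.EC pr.2))).subst σ)
            (R.bigConj (prs.map fun pr => pr.2.cond.subst σ)))

/-- `Var(t, P)`: the variables occurring in subterms of `t` at positions in `P`. -/
def VarsBelow {F : Type} (t : Term F) (P : List (List ℕ)) : Set ℕ :=
  {x | ∃ p ∈ P, ∃ u, t.subtermAt p = some u ∧ x ∈ u.vars}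

/-- `TVar(t, φ, P)`: the non-logical variables (w.r.t. `φ`) in subterms of `t` at
positions in `P`. -/
def TVarsBelow {F : Type} (t φ : Term F) (P : List (List ℕ)) : Set ℕ :=
  {x | ∃ p ∈ P, ∃ u, t.subtermAt p = some u ∧ x ∈ u.vars ∧ x ∉ φ.vars}

/-! ### Closedness conditions -/

namespace LCTRS

variable {F : Type}

/-- A constrained critical pair `s ≈ t [φ]` is development closed. -/
def DevClosedC (R : LCTRS F) (s t φ : Term F) : Prop :=
  ∃ u v ψ, R.smstepFst (s, t, φ) (u, v, ψ) ∧ R.TrivialC u v ψ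

/-- A constrained critical pair (from an overlap at position `p`) is almost
development closed. -/
def AlmostDevClosedC (R : LCTRS F) (p : List ℕ) (s t φ : Term F) : Prop :=
  (p ≠ [] → R.DevClosedC s t φ) ∧
  (p = [] → ∃ a u v ψ, R.smstepFst (s, t, φ) a ∧
    Relation.ReflTransGen (R.sstepSndGe []) a (u, v, ψ) ∧ R.TrivialC u v ψ)

/-- An LCTRS is almost development closed. -/
def AlmostDevClosedLCTRS (R : LCTRS F) : Prop :=
  ∀ p s t φ, IsCCPAt R p s t φ → R.AlmostDevClosedC p s t φ

/-- A constrained critical pair `s ≈ t [φ]` is 1-parallel closed. -/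
def OnePCc (R : LCTRS F) (s t φ : Term F) : Prop :=
  ∃ P a u v ψ, R.sparFst P (s, t, φ) a ∧
    Relation.ReflTransGen (R.sstepSndGe []) a (u, v, ψ) ∧ R.TrivialC u v ψ

/-- A constrained parallel critical pair is 2-parallel closed. -/
def TwoPCc (R : LCTRS F) (Ps : List (List ℕ)) (lsig s t Φ : Term F) : Prop :=
  ∃ Q a u v ψ, R.sparSnd Q (s, t, Φ) a ∧
    Relation.ReflTransGen (R.sstepFstGe []) a (u, v, ψ) ∧ R.TrivialC u v ψ ∧
    TVarsBelow v ψ Q ⊆ TVarsBelow lsig Φ Ps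

/-- An LCTRS is parallel closed. -/
def ParallelClosedLCTRS (R : LCTRS F) : Prop :=
  (∀ p s t φ, IsCCPAt R p s t φ → R.OnePCc s t φ) ∧
  (∀ Ps lsig s t Φ, IsCPCP R Ps lsig s t Φ → R.TwoPCc Ps lsig s t Φ)

/-- Linearity of the left-hand sides in the non-logical variables (this is all that
is needed for left-linearity of the transformed TRS). -/
def LeftLinearOutsideLVar (R : LCTRS F) : Prop :=
  ∀ ρ ∈ R.rules, ∀ x, x ∉ LVar ρ → ρ.lhs.count x ≤ 1

end LCTRS

/-- A TRS is almost development closed. -/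
def AlmostDevClosedTRS {F : Type} (S : TRS F) : Prop :=
  ∀ p s t, IsCPAt S p s t →
    (p ≠ [] → tmstep S s t) ∧
    (p = [] → ∃ w, tmstep S s w ∧ Relation.ReflTransGen (tstep S) t w)

/-- A TRS is 1-parallel closed. -/
def OnePCTRS {F : Type} (S : TRS F) : Prop :=
  ∀ p s t, IsCPAt S p s t → ∃ w, tpar S s w ∧ Relation.ReflTransGen (tstep S) t w

/-- A TRS is 2-parallel closed. -/
def TwoPCTRS {F : Type} (S : TRS F) : Prop :=
  ∀ Ps lsig s t, IsPCP S Ps lsig s t →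
    ∃ v Q, Relation.ReflTransGen (tstep S) s v ∧ tparQ S Q t v ∧
      VarsBelow v Q ⊆ VarsBelow lsig Ps

/-- A TRS is parallel closed. -/
def ParallelClosedTRS {F : Type} (S : TRS F) : Prop := OnePCTRS S ∧ TwoPCTRS S


/-!
Every rule of `R̄` has the form `ℓμ → rμ` for a rule `ℓ → r [φ]` of `R_rc`, where `μ` maps
the logical variables to values satisfying `φ` and renames the remaining ones. Presenting the
rules of a parallel critical pair of `R̄` this way and renaming the underlying rules apart, the
instantiations `μ` followed by the unifier of the pair merge into one substitution `θ`, which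
unifies the corresponding constrained parallel overlap, sends its logical variables to values
and satisfies all its constraints. Hence `θ = σδ` for the most general unifier `σ` of that
overlap: `σ` sends logical variables to values or variables, `δ` turns the constraint of the
resulting constrained parallel critical pair into a true ground formula, and `δ` instantiates
that pair to the given one. The exclusion of trivial root overlaps transfers because
unifiable instances of variant rules without extra variables on the right are variants.
-/

namespace Term

variable {F : Type}

@[elab_as_elim]
lemma ind {P : Term F → Prop} (var : ∀ x, P (.var x))
    (app : ∀ f ts, (∀ t ∈ ts, P t) → P (.app f ts)) : ∀ t, P t
  | .var x => var x
  | .app f ts => app f ts fun t ht =>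
      have : sizeOf t < sizeOf (Term.app f ts) := by
        have := List.sizeOf_lt_of_mem ht; simp; omega
      ind var app t
termination_by t => sizeOf t

@[simp] lemma subst_var (σ : ℕ → Term F) (x : ℕ) : (var x).subst σ = σ x := by rw [subst]

@[simp] lemma subst_app (σ : ℕ → Term F) (f : F) (ts : List (Term F)) :
    (app f ts).subst σ = app f (ts.map (subst σ)) := by
  rw [subst, List.attach_map_val]

@[simp] lemma vars_var (x : ℕ) : (var (F := F) x).vars = {x} := by
  ext y; simp [vars, varsList, eq_comm]

lemma mem_vars_app {f : F} {ts : List (Term F)} {x : ℕ} :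
    x ∈ (app f ts).vars ↔ ∃ t ∈ ts, x ∈ t.vars := by
  simp [vars, varsList]

lemma vars_finite (t : Term F) : t.vars.Finite := t.varsList.finite_toSet

lemma subst_subst (a b : ℕ → Term F) (t : Term F) :
    (t.subst a).subst b = t.subst fun x => (a x).subst b := by
  induction t using ind with
  | var x => simp
  | app f ts ih => simpa using List.map_congr_left ih

lemma subst_congr {a b : ℕ → Term F} {t : Term F} (h : ∀ x ∈ t.vars, a x = b x) :
    t.subst a = t.subst b := by
  induction t using ind with
  | var x => simpa using h x (by simp)
  | app f ts ih =>
      simpa using List.map_congr_left fun t ht =>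
        ih t ht fun x hx => h x (mem_vars_app.2 ⟨t, ht, hx⟩)

lemma subst_subst_of_forall {σ δ θ : ℕ → Term F} (h : ∀ x, (σ x).subst δ = θ x)
    (t : Term F) : (t.subst σ).subst δ = t.subst θ := by
  rw [subst_subst]; exact subst_congr fun x _ => h x

@[simp] lemma subst_id (t : Term F) : t.subst var = t := by
  induction t using ind with
  | var x => simp
  | app f ts ih => simpa using List.map_congr_left ih

lemma mem_vars_subst {σ : ℕ → Term F} {t : Term F} {x : ℕ} :
    x ∈ (t.subst σ).vars ↔ ∃ y ∈ t.vars, x ∈ (σ y).vars := by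
  induction t using ind with
  | var y => simp
  | app f ts ih =>
      simp only [subst_app, mem_vars_app, List.mem_map]
      constructor
      · rintro ⟨-, ⟨t, ht, rfl⟩, hx⟩
        obtain ⟨y, hy, hxy⟩ := (ih t ht).1 hx
        exact ⟨y, ⟨t, ht, hy⟩, hxy⟩
      · rintro ⟨y, ⟨t, ht, hyt⟩, hxy⟩
        exact ⟨_, ⟨t, ht, rfl⟩, (ih t ht).2 ⟨y, hyt, hxy⟩⟩

lemma subst_eq_self_of_vars_eq_empty {t : Term F} (h : t.vars = ∅) (σ : ℕ → Term F) :
    t.subst σ = t := by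
  rw [subst_congr (b := var) (by simp [h]), subst_id]

lemma vars_subst_eq_empty {t : Term F} {σ : ℕ → Term F}
    (h : ∀ x ∈ t.vars, (σ x).vars = ∅) :
    (t.subst σ).vars = ∅ := by
  ext y
  simp only [mem_vars_subst, Set.mem_empty_iff_false, iff_false, not_exists, not_and]
  intro x hx
  simp [h x hx]

lemma isFun_subst {t : Term F} (h : t.isFun) (σ : ℕ → Term F) : (t.subst σ).isFun := by
  cases t with
  | var x => exact h.elim
  | app f ts => rw [subst_app]; trivial

lemma eqOn_vars_of_subst_eq {a b : ℕ → Term F} {t : Term F} (h : t.subst a = t.subst b) :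
    ∀ x ∈ t.vars, a x = b x := by
  induction t using ind with
  | var y => simpa using h
  | app f ts ih =>
      simp only [subst_app, app.injEq, true_and, List.map_inj_left] at h
      intro x hx
      obtain ⟨t, ht, hxt⟩ := mem_vars_app.1 hx
      exact ih t ht (h t ht) x hxt

@[simp] lemma subtermAt_nil (t : Term F) : t.subtermAt [] = some t := by rw [subtermAt]

lemma subtermAt_app_cons {f : F} {ts : List (Term F)} {i : ℕ} {p : List ℕ} :
    (app f ts).subtermAt (i :: p) = ts[i]?.bind (subtermAt · p) := by
  rw [subtermAt]; cases ts[i]? <;> rfl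

lemma subtermAt_subst {t u : Term F} {p : List ℕ} (h : t.subtermAt p = some u)
    (σ : ℕ → Term F) : (t.subst σ).subtermAt p = some (u.subst σ) := by
  induction p generalizing t with
  | nil => simp_all
  | cons i p ih =>
      cases t with
      | var x => simp [subtermAt] at h
      | app f ts =>
          rw [subtermAt_app_cons, Option.bind_eq_some_iff] at h
          obtain ⟨ti, hti, h⟩ := h
          rw [subst_app, subtermAt_app_cons, List.getElem?_map, hti]
          exact ih h

lemma subtermAt_subst_cases {t u : Term F} {σ : ℕ → Term F} {p : List ℕ}
    (h : (t.subst σ).subtermAt p = some u) :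
    (∃ w, t.subtermAt p = some w ∧ u = w.subst σ) ∨
    (∃ x q p', p = q ++ p' ∧ p' ≠ [] ∧ t.subtermAt q = some (var x) ∧
      (σ x).subtermAt p' = some u) := by
  induction p generalizing t with
  | nil => simp at h; exact .inl ⟨t, by simp, h.symm⟩
  | cons i p ih =>
      cases t with
      | var x => exact .inr ⟨x, [], i :: p, rfl, by simp, by simp, by simpa using h⟩
      | app f ts =>
          rw [subst_app, subtermAt_app_cons, List.getElem?_map, Option.bind_eq_some_iff] at h
          obtain ⟨v, hv, h⟩ := h
          obtain ⟨ti, hti, rfl⟩ := Option.map_eq_some_iff.1 hv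
          have hsub : ∀ {q} {w : Term F}, ti.subtermAt q = some w →
              (app f ts).subtermAt (i :: q) = some w := fun hq => by
            rw [subtermAt_app_cons, hti]; exact hq
          rcases ih h with ⟨w, hw, rfl⟩ | ⟨x, q, p', rfl, hne, hq, hp'⟩
          · exact .inl ⟨w, hsub hw, rfl⟩
          · exact .inr ⟨x, i :: q, p', rfl, hne, hsub hq, hp'⟩

lemma vars_subset_of_subtermAt {t w : Term F} {p : List ℕ} (h : t.subtermAt p = some w) :
    w.vars ⊆ t.vars := by
  induction p generalizing t with
  | nil => simp_all
  | cons i p ih =>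
      cases t with
      | var x => simp [subtermAt] at h
      | app f ts =>
          rw [subtermAt_app_cons, Option.bind_eq_some_iff] at h
          obtain ⟨ti, hti, h⟩ := h
          exact fun x hx => mem_vars_app.2 ⟨ti, List.mem_of_getElem? hti, ih h hx⟩

lemma exists_replaceAt_eq_some {t w : Term F} {p : List ℕ} (h : t.subtermAt p = some w)
    (u : Term F) : ∃ t', t.replaceAt p u = some t' := by
  induction p generalizing t with
  | nil => exact ⟨u, by rw [replaceAt]⟩
  | cons i p ih =>
      cases t with
      | var x => simp [subtermAt] at h
      | app f ts =>
          rw [subtermAt_app_cons, Option.bind_eq_some_iff] at h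
          obtain ⟨ti, hti, h⟩ := h
          obtain ⟨t', ht'⟩ := ih h
          exact ⟨app f (ts.set i t'), by simp [replaceAt, hti, ht']⟩

lemma replaceAt_subst {t t' u : Term F} {p : List ℕ} (h : t.replaceAt p u = some t')
    (σ : ℕ → Term F) : (t.subst σ).replaceAt p (u.subst σ) = some (t'.subst σ) := by
  induction p generalizing t t' with
  | nil => rw [replaceAt] at h ⊢; cases h; rfl
  | cons i p ih =>
      cases t with
      | var x => simp [replaceAt] at h
      | app f ts =>
          cases hti : ts[i]? with
          | none => simp [replaceAt, hti] at h
          | some ti =>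
              cases hrep : ti.replaceAt p u with
              | none => simp [replaceAt, hti, hrep] at h
              | some ti' =>
                  simp only [replaceAt, hti, hrep, Option.some.injEq] at h
                  subst h
                  simp [replaceAt, hti, ih hrep, List.map_set]

lemma subtermAt_replaceAt_of_parallel {t t' u w : Term F} {p q : List ℕ}
    (hpq : ParallelPos p q) (hq : t.subtermAt q = some w)
    (h : t.replaceAt p u = some t') : t'.subtermAt q = some w := by
  induction p generalizing t t' q with
  | nil => exact absurd List.nil_prefix hpq.1
  | cons i p ih =>
      cases q with
      | nil => exact absurd List.nil_prefix hpq.2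
      | cons j q =>
          cases t with
          | var x => simp [replaceAt] at h
          | app f ts =>
              cases hti : ts[i]? with
              | none => simp [replaceAt, hti] at h
              | some ti =>
                  cases hrep : ti.replaceAt p u with
                  | none => simp [replaceAt, hti, hrep] at h
                  | some ti' =>
                      simp only [replaceAt, hti, hrep, Option.some.injEq] at h
                      subst h
                      rw [subtermAt_app_cons] at hq ⊢
                      by_cases hij : i = j
                      · subst hij
                        have hpq' : ParallelPos p q :=
                          ⟨fun h => hpq.1 (List.cons_prefix_cons.2 ⟨rfl, h⟩),
                            fun h => hpq.2 (List.cons_prefix_cons.2 ⟨rfl, h⟩)⟩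
                        rw [hti] at hq
                        simpa [List.getElem?_set_self', hti] using ih hpq' hq hrep
                      · rwa [List.getElem?_set_ne hij]

def size : Term F → ℕ
  | var _ => 1
  | app _ ts => (ts.attach.map fun ⟨t, _⟩ => size t).sum + 1

@[simp] lemma size_var (x : ℕ) : (var (F := F) x).size = 1 := by rw [size]

@[simp] lemma size_app (f : F) (ts : List (Term F)) :
    (app f ts).size = (ts.map size).sum + 1 := by
  rw [size, List.attach_map_val]

lemma size_subst_lt_of_mem {u : Term F} {ts : List (Term F)} (hu : u ∈ ts) (f : F)
    (σ : ℕ → Term F) : (u.subst σ).size < ((app f ts).subst σ).size := by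
  have := List.le_sum_of_mem (List.mem_map_of_mem (f := fun t => (t.subst σ).size) hu)
  simp only [subst_app, size_app, List.map_map]
  exact Nat.lt_succ_of_le this

lemma size_le_size_subst {x : ℕ} {t : Term F} (h : x ∈ t.vars) (σ : ℕ → Term F) :
    (σ x).size ≤ (t.subst σ).size := by
  induction t using ind with
  | var y => simp_all
  | app g us ih =>
      obtain ⟨u, hu, hxu⟩ := mem_vars_app.1 h
      exact (ih u hu hxu).trans (size_subst_lt_of_mem hu g σ).le

lemma ne_subst_of_mem_vars {x : ℕ} {t : Term F} (h : x ∈ t.vars) (ht : t ≠ var x)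
    (σ : ℕ → Term F) : σ x ≠ t.subst σ := by
  cases t with
  | var y => simp_all
  | app f ts =>
      obtain ⟨u, hu, hxu⟩ := mem_vars_app.1 h
      exact fun he => (size_le_size_subst hxu σ).not_gt (he ▸ size_subst_lt_of_mem hu f σ)

lemma mem_vars_rename {π : ℕ → ℕ} {t : Term F} {x : ℕ} :
    x ∈ (t.rename π).vars ↔ ∃ y ∈ t.vars, π y = x := by
  simp [rename, mem_vars_subst, eq_comm]

lemma rename_rename (π κ : ℕ → ℕ) (t : Term F) :
    (t.rename κ).rename π = t.rename (π ∘ κ) := by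
  simp [rename, subst_subst]

lemma rename_subst (π : ℕ → ℕ) (σ : ℕ → Term F) (t : Term F) :
    (t.rename π).subst σ = t.subst (σ ∘ π) := by
  simp [rename, subst_subst, Function.comp_def]

@[simp] lemma rename_id (t : Term F) : t.rename id = t := subst_id t

lemma rename_injective (π : ℕ ≃ ℕ) : Function.Injective (rename (F := F) π) :=
    fun s t h => by
  have := congrArg (rename π.symm) h
  rwa [rename_rename, rename_rename, Equiv.symm_comp_self, rename_id, rename_id] at this

end Term

lemma replaceAll_subst {F : Type} {t s : Term F} {l : List (List ℕ × Term F)}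
    (h : replaceAll t l = some s) (σ : ℕ → Term F) :
    replaceAll (t.subst σ) (l.map fun pu => (pu.1, pu.2.subst σ)) = some (s.subst σ) := by
  induction l generalizing t with
  | nil => simp_all [replaceAll]
  | cons pu l ih =>
      cases hrep : t.replaceAt pu.1 pu.2 with
      | none => simp [replaceAll, hrep] at h
      | some t' =>
          simp only [replaceAll, hrep] at h
          simpa [replaceAll, Term.replaceAt_subst hrep σ] using ih h

lemma exists_replaceAll_eq_some {F : Type} {t : Term F} {l : List (List ℕ × Term F)}
    (hpos : ∀ pu ∈ l, ∃ w, t.subtermAt pu.1 = some w)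
    (hpar : (l.map (·.1)).Pairwise ParallelPos) :
    ∃ s, replaceAll t l = some s := by
  induction l generalizing t with
  | nil => exact ⟨t, rfl⟩
  | cons pu l ih =>
      rw [List.map_cons, List.pairwise_cons] at hpar
      obtain ⟨w, hw⟩ := hpos pu List.mem_cons_self
      obtain ⟨t', ht'⟩ := Term.exists_replaceAt_eq_some hw pu.2
      obtain ⟨s, hs⟩ := ih (t := t') (fun qv hqv => by
        obtain ⟨w', hw'⟩ := hpos qv (List.mem_cons_of_mem _ hqv)
        exact ⟨w', Term.subtermAt_replaceAt_of_parallel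
          (hpar.1 qv.1 (List.mem_map_of_mem hqv)) hw' ht'⟩) hpar.2
      exact ⟨s, by simp [replaceAll, ht', hs]⟩

/-! ### Unification -/

section Unification

variable {F : Type}

def UnifiesE (θ : ℕ → Term F) (E : List (Term F × Term F)) : Prop :=
  ∀ e ∈ E, e.1.subst θ = e.2.subst θ

def IsMGUE (σ : ℕ → Term F) (E : List (Term F × Term F)) : Prop :=
  UnifiesE σ E ∧ ∀ θ, UnifiesE θ E → ∃ δ, ∀ x, (σ x).subst δ = θ x

def varsE (E : List (Term F × Term F)) : Finset ℕ :=
  (E.flatMap fun e => e.1.varsList ++ e.2.varsList).toFinset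

def sizeE (E : List (Term F × Term F)) : ℕ :=
  (E.map fun e => e.1.size + e.2.size).sum

lemma mem_varsE {x : ℕ} {E : List (Term F × Term F)} :
    x ∈ varsE E ↔ ∃ e ∈ E, x ∈ e.1.vars ∨ x ∈ e.2.vars := by
  simp [varsE, Term.vars]

@[simp] lemma sizeE_cons (s t : Term F) (E : List (Term F × Term F)) :
    sizeE ((s, t) :: E) = s.size + t.size + sizeE E := by
  simp [sizeE]

lemma varsE_subset_cons (e : Term F × Term F) (E : List (Term F × Term F)) :
    varsE E ⊆ varsE (e :: E) := by
  intro x hx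
  obtain ⟨e', he', h⟩ := mem_varsE.1 hx
  exact mem_varsE.2 ⟨e', List.mem_cons_of_mem _ he', h⟩

lemma unifiesE_cons {θ : ℕ → Term F} {s t : Term F} {E : List (Term F × Term F)} :
    UnifiesE θ ((s, t) :: E) ↔ s.subst θ = t.subst θ ∧ UnifiesE θ E := by
  simp [UnifiesE]

lemma isMGUE_cons_swap {σ : ℕ → Term F} {s t : Term F} {E : List (Term F × Term F)}
    (h : IsMGUE σ ((s, t) :: E)) : IsMGUE σ ((t, s) :: E) := by
  have key : ∀ θ, UnifiesE θ ((t, s) :: E) ↔ UnifiesE θ ((s, t) :: E) := fun θ => by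
    rw [unifiesE_cons, unifiesE_cons, eq_comm]
  exact ⟨(key σ).2 h.1, fun θ hθ => h.2 θ ((key θ).1 hθ)⟩

lemma isMGUE_of_cons_self {σ : ℕ → Term F} {t : Term F} {E : List (Term F × Term F)}
    (h : IsMGUE σ E) : IsMGUE σ ((t, t) :: E) :=
  ⟨unifiesE_cons.2 ⟨rfl, h.1⟩, fun θ hθ => h.2 θ (unifiesE_cons.1 hθ).2⟩

lemma unifiesE_zip {θ : ℕ → Term F} {ss ts : List (Term F)} (hlen : ss.length = ts.length) :
    UnifiesE θ (ss.zip ts) ↔ ss.map (Term.subst θ) = ts.map (Term.subst θ) := by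
  induction ss generalizing ts with
  | nil => cases ts <;> simp_all [UnifiesE]
  | cons s ss ih =>
      cases ts with
      | nil => simp at hlen
      | cons t ts =>
          rw [List.zip_cons_cons, unifiesE_cons, ih (by simpa using hlen)]
          simp

lemma unifiesE_cons_app_iff {θ : ℕ → Term F} {f : F} {ss ts : List (Term F)}
    {E : List (Term F × Term F)} (hlen : ss.length = ts.length) :
    UnifiesE θ ((.app f ss, .app f ts) :: E) ↔ UnifiesE θ (ss.zip ts ++ E) := by
  rw [unifiesE_cons, Term.subst_app, Term.subst_app, Term.app.injEq, ← unifiesE_zip hlen]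
  simp [UnifiesE, or_imp, forall_and]

lemma sizeE_zip_append {ss ts : List (Term F)} (hlen : ss.length = ts.length)
    (E : List (Term F × Term F)) :
    sizeE (ss.zip ts ++ E) = (ss.map Term.size).sum + (ts.map Term.size).sum + sizeE E := by
  induction ss generalizing ts with
  | nil => cases ts <;> simp_all [sizeE]
  | cons s ss ih =>
      cases ts with
      | nil => simp at hlen
      | cons t ts =>
          simp only [List.zip_cons_cons, List.cons_append, sizeE_cons, ih (by simpa using hlen)]
          simp; omega

lemma varsE_zip_append_subset {f g : F} {ss ts : List (Term F)} (E : List (Term F × Term F)) :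
    varsE (ss.zip ts ++ E) ⊆ varsE ((.app f ss, .app g ts) :: E) := by
  intro x hx
  obtain ⟨e, he, hor⟩ := mem_varsE.1 hx
  rcases List.mem_append.1 he with he | he
  · obtain ⟨h1, h2⟩ := List.of_mem_zip he
    refine mem_varsE.2 ⟨_, List.mem_cons_self, ?_⟩
    exact hor.imp (fun h => Term.mem_vars_app.2 ⟨_, h1, h⟩)
      (fun h => Term.mem_vars_app.2 ⟨_, h2, h⟩)
  · exact varsE_subset_cons _ _ (mem_varsE.2 ⟨e, he, hor⟩)

/-- Variable elimination: solve `x ≈ t` by the binding `x ↦ t`. -/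
def elimE (x : ℕ) (t : Term F) (E : List (Term F × Term F)) : List (Term F × Term F) :=
  E.map fun e =>
    (e.1.subst (Function.update Term.var x t), e.2.subst (Function.update Term.var x t))

lemma subst_update_subst {θ : ℕ → Term F} {x : ℕ} {t : Term F} (hθ : θ x = t.subst θ)
    (u : Term F) : (u.subst (Function.update Term.var x t)).subst θ = u.subst θ := by
  rw [Term.subst_subst]
  refine Term.subst_congr fun y _ => ?_
  by_cases hyx : y = x
  · subst hyx; simp [hθ]
  · simp [hyx]

lemma unifiesE_elimE {θ : ℕ → Term F} {x : ℕ} {t : Term F} {E : List (Term F × Term F)}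
    (h : UnifiesE θ ((.var x, t) :: E)) : UnifiesE θ (elimE x t E) := by
  rw [unifiesE_cons, Term.subst_var] at h
  intro e he
  obtain ⟨e0, he0, rfl⟩ := List.mem_map.1 he
  rw [subst_update_subst h.1, subst_update_subst h.1]
  exact h.2 e0 he0

lemma card_varsE_elimE_lt {x : ℕ} {t : Term F} {E : List (Term F × Term F)}
    (hx : x ∉ t.vars) : (varsE (elimE x t E)).card < (varsE ((.var x, t) :: E)).card := by
  have hvars : ∀ u : Term F, ∀ y ∈ (u.subst (Function.update Term.var x t)).vars,
      y ≠ x ∧ (y ∈ u.vars ∨ y ∈ t.vars) := by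
    intro u y hy
    obtain ⟨z, hz, hyz⟩ := Term.mem_vars_subst.1 hy
    by_cases hzx : z = x
    · subst hzx
      simp only [Function.update_self] at hyz
      exact ⟨fun h => hx (h ▸ hyz), .inr hyz⟩
    · simp only [Function.update_of_ne hzx, Term.vars_var, Set.mem_singleton_iff] at hyz
      exact ⟨hyz ▸ hzx, .inl (hyz ▸ hz)⟩
  have hsub : varsE (elimE x t E) ⊆ (varsE ((.var x, t) :: E)).erase x := by
    intro y hy
    obtain ⟨e, he, hor⟩ := mem_varsE.1 hy
    obtain ⟨e0, he0, rfl⟩ := List.mem_map.1 he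
    have : y ≠ x ∧ (y ∈ e0.1.vars ∨ y ∈ e0.2.vars ∨ y ∈ t.vars) := by
      rcases hor with h | h
      · obtain ⟨hne, h⟩ := hvars _ y h; exact ⟨hne, by tauto⟩
      · obtain ⟨hne, h⟩ := hvars _ y h; exact ⟨hne, by tauto⟩
    refine Finset.mem_erase.2 ⟨this.1, mem_varsE.2 ?_⟩
    rcases this.2 with h | h | h
    · exact ⟨e0, List.mem_cons_of_mem _ he0, .inl h⟩
    · exact ⟨e0, List.mem_cons_of_mem _ he0, .inr h⟩
    · exact ⟨_, List.mem_cons_self, .inr h⟩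
  have hxmem : x ∈ varsE ((.var x, t) :: E) :=
    mem_varsE.2 ⟨_, List.mem_cons_self, .inl (by simp)⟩
  calc (varsE (elimE x t E)).card ≤ ((varsE ((.var x, t) :: E)).erase x).card :=
        Finset.card_le_card hsub
    _ < _ := Finset.card_erase_lt_of_mem hxmem

lemma isMGUE_cons_var {σ : ℕ → Term F} {x : ℕ} {t : Term F} {E : List (Term F × Term F)}
    (hx : x ∉ t.vars) (h : IsMGUE σ (elimE x t E)) :
    IsMGUE (fun y => (Function.update Term.var x t y).subst σ) ((.var x, t) :: E) := by
  have hσx : (Term.var x).subst (fun y => (Function.update Term.var x t y).subst σ)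
      = t.subst fun y => (Function.update Term.var x t y).subst σ := by
    rw [Term.subst_var, Function.update_self]
    exact Term.subst_congr fun y hy => by simp [Function.update_of_ne (ne_of_mem_of_not_mem hy hx)]
  refine ⟨unifiesE_cons.2 ⟨hσx, fun e he => ?_⟩, fun θ hθ => ?_⟩
  · rw [← Term.subst_subst, ← Term.subst_subst]
    exact h.1 _ (List.mem_map_of_mem he)
  · obtain ⟨δ, hδ⟩ := h.2 θ (unifiesE_elimE hθ)
    refine ⟨δ, fun y => ?_⟩
    rw [Term.subst_subst, funext hδ]
    by_cases hyx : y = x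
    · subst hyx
      simpa using ((unifiesE_cons.1 hθ).1).symm
    · simp [hyx]

lemma varsE_cons_swap (s t : Term F) (E : List (Term F × Term F)) :
    varsE ((t, s) :: E) = varsE ((s, t) :: E) := by
  ext x; simp only [mem_varsE, List.mem_cons, exists_eq_or_imp, or_comm (a := x ∈ t.vars)]

lemma prodLex_of_le_of_lt {a b c d : ℕ} (hac : a ≤ c) (hbd : b < d) :
    Prod.Lex (· < ·) (· < ·) (a, b) (c, d) := by
  rcases hac.lt_or_eq with h | rfl
  · exact .left _ _ h
  · exact .right _ hbd

theorem exists_isMGUE :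
    ∀ E : List (Term F × Term F), (∃ θ, UnifiesE θ E) → ∃ σ, IsMGUE σ E
  | [], _ => ⟨Term.var, by simp [UnifiesE], fun θ _ => ⟨θ, by simp⟩⟩
  | (.var x, t) :: E, ⟨θ, hθ⟩ => by
    by_cases hxt : t = .var x
    · subst hxt
      obtain ⟨σ, hσ⟩ := exists_isMGUE E ⟨θ, (unifiesE_cons.1 hθ).2⟩
      exact ⟨σ, isMGUE_of_cons_self hσ⟩
    by_cases hx : x ∈ t.vars
    · exact (Term.ne_subst_of_mem_vars hx hxt θ (by simpa using (unifiesE_cons.1 hθ).1)).elim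
    obtain ⟨σ, hσ⟩ := exists_isMGUE (elimE x t E) ⟨θ, unifiesE_elimE hθ⟩
    exact ⟨_, isMGUE_cons_var hx hσ⟩
  | (.app f ss, .var y) :: E, ⟨θ, hθ⟩ => by
    have hθ' : UnifiesE θ ((.var y, .app f ss) :: E) := by
      rw [unifiesE_cons, eq_comm, ← unifiesE_cons]; exact hθ
    by_cases hy : y ∈ (Term.app f ss).vars
    · exact (Term.ne_subst_of_mem_vars hy (by simp) θ
        (by simpa using (unifiesE_cons.1 hθ').1)).elim
    obtain ⟨σ, hσ⟩ := exists_isMGUE (elimE y (.app f ss) E) ⟨θ, unifiesE_elimE hθ'⟩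
    exact ⟨_, isMGUE_cons_swap (isMGUE_cons_var hy hσ)⟩
  | (.app f ss, .app g ts) :: E, ⟨θ, hθ⟩ => by
    have hhead := (unifiesE_cons.1 hθ).1
    simp only [Term.subst_app, Term.app.injEq] at hhead
    obtain ⟨rfl, hmap⟩ := hhead
    have hlen : ss.length = ts.length := by simpa using congrArg List.length hmap
    obtain ⟨σ, hσ⟩ :=
      exists_isMGUE (ss.zip ts ++ E) ⟨θ, (unifiesE_cons_app_iff hlen).1 hθ⟩
    exact ⟨σ, (unifiesE_cons_app_iff hlen).2 hσ.1,
      fun θ' hθ' => hσ.2 θ' ((unifiesE_cons_app_iff hlen).1 hθ')⟩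
termination_by E => ((varsE E).card, sizeE E)
decreasing_by
  · exact prodLex_of_le_of_lt (Finset.card_le_card (varsE_subset_cons _ _)) (by simp)
  · exact .left _ _ (card_varsE_elimE_lt hx)
  · exact .left _ _ (varsE_cons_swap (Term.app f ss) (.var y) E ▸ card_varsE_elimE_lt hy)
  · exact prodLex_of_le_of_lt (Finset.card_le_card (varsE_zip_append_subset E))
      (by rw [sizeE_zip_append hlen]; simp; omega)

end Unification

/-! ### Values and constraints -/

section Rules

variable {F : Type}

def ruleRename (π : ℕ → ℕ) (ρ : Rule F) : Rule F :=
  ⟨ρ.lhs.rename π, ρ.rhs.rename π, ρ.cond.rename π⟩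

lemma isVariantR_ruleRename (π : ℕ ≃ ℕ) (ρ : Rule F) : IsVariantR ρ (ruleRename π ρ) :=
  ⟨π, rfl, rfl, rfl⟩

lemma IsVariantR.of_ruleRename {π₁ π₂ : ℕ ≃ ℕ} {ρ₁ ρ₂ : Rule F}
    (h : IsVariantR (ruleRename π₁ ρ₁) (ruleRename π₂ ρ₂)) :
    ∃ κ : ℕ ≃ ℕ, ρ₂ = ruleRename κ ρ₁ := by
  obtain ⟨π, hl, hr, hc⟩ := h
  refine ⟨(π₁.trans π).trans π₂.symm, ?_⟩
  have key : ∀ u v : Term F, v.rename π₂ = (u.rename π₁).rename π →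
      v = u.rename ((π₁.trans π).trans π₂.symm) := fun u v h => by
    apply Term.rename_injective π₂
    simp [h, Term.rename_rename, Function.comp_def]
  cases ρ₂
  simp only [ruleRename, Rule.mk.injEq] at hl hr hc ⊢
  exact ⟨key _ _ hl, key _ _ hr, key _ _ hc⟩

lemma mem_ruleVars_ruleRename {π : ℕ → ℕ} {ρ : Rule F} {x : ℕ} :
    x ∈ ruleVars (ruleRename π ρ) ↔ ∃ y ∈ ruleVars ρ, π y = x := by
  simp only [ruleVars, ruleRename, Set.mem_union, Term.mem_vars_rename]
  grind

lemma mem_LVar_ruleRename {π : ℕ ≃ ℕ} {ρ : Rule F} {x : ℕ} :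
    x ∈ LVar (ruleRename π ρ) ↔ ∃ y ∈ LVar ρ, π y = x := by
  simp only [LVar, ruleRename, Set.mem_union, Set.mem_sdiff, Term.mem_vars_rename]
  constructor
  · rintro (⟨y, hy, rfl⟩ | ⟨⟨y, hy, rfl⟩, hn⟩)
    · exact ⟨y, .inl hy, rfl⟩
    · exact ⟨y, .inr ⟨hy, fun hc => hn ⟨y, hc, rfl⟩⟩, rfl⟩
  · rintro ⟨y, hy | ⟨hy, hn⟩, rfl⟩
    · exact .inl ⟨y, hy, rfl⟩
    · exact .inr ⟨⟨y, hy, rfl⟩, fun ⟨z, hz, hzy⟩ => hn (π.injective hzy ▸ hz)⟩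

lemma rhs_vars_subset_of_ruleRename {π : ℕ ≃ ℕ} {ρ : Rule F}
    (h : (ruleRename π ρ).rhs.vars ⊆ (ruleRename π ρ).lhs.vars) :
    ρ.rhs.vars ⊆ ρ.lhs.vars := by
  intro x hx
  obtain ⟨y, hy, hyx⟩ := Term.mem_vars_rename.1 (h (Term.mem_vars_rename.2 ⟨x, hx, rfl⟩))
  rwa [← π.injective hyx]

lemma ruleVars_finite (ρ : Rule F) : (ruleVars ρ).Finite :=
  ((ρ.lhs.vars_finite.union ρ.rhs.vars_finite).union ρ.cond.vars_finite)

lemma LVar_subset_ruleVars (ρ : Rule F) : LVar ρ ⊆ ruleVars ρ := by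
  rintro x (hx | hx)
  · exact .inr hx
  · exact .inl (.inr hx.1)

lemma lhs_vars_subset_ruleVars (ρ : Rule F) : ρ.lhs.vars ⊆ ruleVars ρ :=
  fun _ hx => .inl (.inl hx)

lemma rhs_vars_subset_ruleVars (ρ : Rule F) : ρ.rhs.vars ⊆ ruleVars ρ :=
  fun _ hx => .inl (.inr hx)

lemma cond_vars_subset_LVar (ρ : Rule F) : ρ.cond.vars ⊆ LVar ρ := fun _ hx => .inl hx

lemma mem_LVar_of_mem_EVarList {ρ : Rule F} {x : ℕ} (h : x ∈ EVarList ρ) : x ∈ LVar ρ := by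
  simp [EVarList] at h
  exact .inr ⟨h.1, h.2.1⟩

end Rules

namespace LCTRS

variable {F : Type} {R : LCTRS F}

namespace WF

variable (hwf : R.WF)
include hwf

lemma val_subset_fth : R.Val ⊆ R.Fth := hwf.1

lemma J_mem_val (t : Term F) : R.J t ∈ R.Val := hwf.2.2.2.1 t

lemma J_val {v : F} (hv : v ∈ R.Val) : R.J (.app v []) = v := hwf.2.2.2.2.1 v hv

lemma tt_mem_val : R.tt ∈ R.Val := hwf.2.2.2.2.2.1

lemma andS_mem_fth : R.andS ∈ R.Fth := hwf.2.2.2.2.2.2.1.1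

lemma eqS_mem_fth : R.eqS ∈ R.Fth := hwf.2.2.2.2.2.2.2.2.1.1

lemma J_conj {a b : Term F} (ha : IsLogical R.Fth a) (hb : IsLogical R.Fth b)
    (hga : Ground a) (hgb : Ground b) :
    R.J (R.conj a b) = R.tt ↔ R.J a = R.tt ∧ R.J b = R.tt :=
  hwf.2.2.2.2.2.2.2.2.2.2.1 a b ha hb hga hgb

lemma J_eq {a b : Term F} (ha : IsLogical R.Fth a) (hb : IsLogical R.Fth b)
    (hga : Ground a) (hgb : Ground b) :
    R.J (.app R.eqS [a, b]) = R.tt ↔ R.J a = R.J b :=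
  hwf.2.2.2.2.2.2.2.2.2.2.2.1 a b ha hb hga hgb

lemma rule_lhs_cond {ρ : Rule F} (hρ : ρ ∈ R.rules) :
    (∃ f ts, ρ.lhs = .app f ts ∧ f ∈ R.Fte \ R.Fth) ∧ IsLogical R.Fth ρ.cond :=
  hwf.2.2.2.2.2.2.2.2.2.2.2.2 ρ hρ

end WF

lemma ground_iff_vars_eq_empty {t : Term F} : Ground t ↔ t.vars = ∅ := by
  simp [Ground, Term.vars, Set.eq_empty_iff_forall_notMem, List.eq_nil_iff_forall_not_mem]

lemma vars_eq_empty_of_isVal {t : Term F} (h : R.isVal t) : t.vars = ∅ := by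
  obtain ⟨v, -, rfl⟩ := h
  simp [Term.vars, Term.varsList]

lemma subst_eq_self_of_isVal {t : Term F} (h : R.isVal t) (σ : ℕ → Term F) : t.subst σ = t :=
  Term.subst_eq_self_of_vars_eq_empty (vars_eq_empty_of_isVal h) σ

lemma isVal_or_var_of_isVal_subst {u : Term F} {δ : ℕ → Term F} (h : R.isVal (u.subst δ)) :
    R.isVal u ∨ ∃ y, u = .var y := by
  obtain ⟨v, hv, heq⟩ := h
  cases u with
  | var y => exact .inr ⟨y, rfl⟩
  | app f ts =>
      simp only [Term.subst_app, Term.app.injEq, List.map_eq_nil_iff] at heq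
      exact .inl ⟨v, hv, by rw [heq.1, heq.2]⟩

lemma isVal_of_mem_vars_subst {u : Term F} {δ : ℕ → Term F} (h : R.isVal (u.subst δ))
    {y : ℕ} (hy : y ∈ u.vars) : R.isVal (δ y) := by
  rcases isVal_or_var_of_isVal_subst h with hval | ⟨z, rfl⟩
  · simp [vars_eq_empty_of_isVal hval] at hy
  · simp_all

lemma isLogical_of_isVal (hwf : R.WF) {t : Term F} (h : R.isVal t) : IsLogical R.Fth t := by
  obtain ⟨v, hv, rfl⟩ := h
  exact .app (hwf.val_subset_fth hv) (by simp)

lemma isLogical_subst {t : Term F} {σ : ℕ → Term F} (h : IsLogical R.Fth t)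
    (hσ : ∀ x ∈ t.vars, IsLogical R.Fth (σ x)) : IsLogical R.Fth (t.subst σ) := by
  induction h with
  | var x => simpa using hσ x
  | app hf _ ih =>
      rw [Term.subst_app]
      refine .app hf fun _ hmem => ?_
      obtain ⟨u, hu, rfl⟩ := List.mem_map.1 hmem
      exact ih u hu fun x hx => hσ x (Term.mem_vars_app.2 ⟨u, hu, hx⟩)

lemma validC_of_vars_eq_empty {t : Term F} (hg : t.vars = ∅) (h : R.J t = R.tt) :
    R.validC t := fun γ _ => by rwa [Term.subst_eq_self_of_vars_eq_empty hg]

lemma J_eq_tt_of_validC {t : Term F} (hg : t.vars = ∅) (h : R.validC t) : R.J t = R.tt := by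
  simpa using h .var (by simp [valAssign, hg])

@[simp] lemma subst_conj (a b : Term F) (σ : ℕ → Term F) :
    (R.conj a b).subst σ = R.conj (a.subst σ) (b.subst σ) := by
  simp [conj]

lemma subst_bigConj (l : List (Term F)) (σ : ℕ → Term F) :
    (R.bigConj l).subst σ = R.bigConj (l.map (Term.subst σ)) := by
  induction l with
  | nil => simp [bigConj, trueT]
  | cons a l ih =>
      simp only [bigConj, List.foldr_cons, List.map_cons, subst_conj] at ih ⊢
      rw [ih]

lemma mem_vars_conj {a b : Term F} {x : ℕ} :
    x ∈ (R.conj a b).vars ↔ x ∈ a.vars ∨ x ∈ b.vars := by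
  simp [conj, Term.mem_vars_app]

lemma mem_vars_bigConj {l : List (Term F)} {x : ℕ} :
    x ∈ (R.bigConj l).vars ↔ ∃ a ∈ l, x ∈ a.vars := by
  induction l with
  | nil => simp [bigConj, trueT, Term.mem_vars_app]
  | cons a l ih => simp [bigConj, mem_vars_conj, ← ih, bigConj]

def GroundTrue (R : LCTRS F) (t : Term F) : Prop :=
  IsLogical R.Fth t ∧ t.vars = ∅ ∧ R.J t = R.tt

lemma GroundTrue.conj (hwf : R.WF) {a b : Term F} (ha : R.GroundTrue a)
    (hb : R.GroundTrue b) : R.GroundTrue (R.conj a b) := by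
  refine ⟨.app hwf.andS_mem_fth ?_, ?_, ?_⟩
  · simp only [List.mem_cons, List.not_mem_nil, or_false]
    rintro t (rfl | rfl) <;> [exact ha.1; exact hb.1]
  · ext x; simp [mem_vars_conj, ha.2.1, hb.2.1]
  · exact (hwf.J_conj ha.1 hb.1 (ground_iff_vars_eq_empty.2 ha.2.1)
      (ground_iff_vars_eq_empty.2 hb.2.1)).2 ⟨ha.2.2, hb.2.2⟩

lemma GroundTrue.bigConj (hwf : R.WF) {l : List (Term F)} (h : ∀ a ∈ l, R.GroundTrue a) :
    R.GroundTrue (R.bigConj l) := by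
  induction l with
  | nil =>
      refine ⟨.app (hwf.val_subset_fth hwf.tt_mem_val) (by simp), ?_, hwf.J_val hwf.tt_mem_val⟩
      simp [LCTRS.bigConj, trueT, Term.vars, Term.varsList]
  | cons a l ih =>
      exact .conj hwf (h a List.mem_cons_self) (ih fun b hb => h b (List.mem_cons_of_mem _ hb))

lemma GroundTrue.eq_self (hwf : R.WF) {a : Term F} (ha : R.isVal a) :
    R.GroundTrue (.app R.eqS [a, a]) := by
  have hl := isLogical_of_isVal hwf ha
  have hg := vars_eq_empty_of_isVal ha
  refine ⟨.app hwf.eqS_mem_fth (by simp [hl]), by ext x; simp [Term.mem_vars_app, hg], ?_⟩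
  exact (hwf.J_eq hl hl (ground_iff_vars_eq_empty.2 hg) (ground_iff_vars_eq_empty.2 hg)).2 rfl

lemma GroundTrue.subst_of_validC (hwf : R.WF) {φ : Term F} {θ : ℕ → Term F}
    (hφ : IsLogical R.Fth φ) (hval : ∀ x ∈ φ.vars, R.isVal (θ x))
    (h : R.validC (φ.subst θ)) :
    R.GroundTrue (φ.subst θ) := by
  have hg : (φ.subst θ).vars = ∅ :=
    Term.vars_subst_eq_empty fun x hx => vars_eq_empty_of_isVal (hval x hx)
  exact ⟨isLogical_subst hφ fun x hx => isLogical_of_isVal hwf (hval x hx), hg,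
    J_eq_tt_of_validC hg h⟩

lemma EC_subst (ρ : Rule F) (θ : ℕ → Term F) :
    (R.EC ρ).subst θ = R.bigConj ((EVarList ρ).map fun x => .app R.eqS [θ x, θ x]) := by
  simp [EC, subst_bigConj, List.map_map, Function.comp_def]

lemma mem_EVarList_of_mem_vars_EC {ρ : Rule F} {x : ℕ} (h : x ∈ (R.EC ρ).vars) :
    x ∈ EVarList ρ := by
  simp only [EC, mem_vars_bigConj, List.mem_map] at h
  obtain ⟨-, ⟨y, hy, rfl⟩, hx⟩ := h
  simp [Term.mem_vars_app] at hx
  exact hx ▸ hy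

lemma GroundTrue.EC_subst (hwf : R.WF) {ρ : Rule F} {θ : ℕ → Term F}
    (h : ∀ x ∈ LVar ρ, R.isVal (θ x)) : R.GroundTrue ((R.EC ρ).subst θ) := by
  rw [LCTRS.EC_subst]
  refine .bigConj hwf fun a ha => ?_
  obtain ⟨x, hx, rfl⟩ := List.mem_map.1 ha
  exact .eq_self hwf (h x (mem_LVar_of_mem_EVarList hx))

lemma exists_root_of_mem_Rrc (hwf : R.WF) {ρ : Rule F} (h : ρ ∈ R.Rrc) :
    ∃ f ts, ρ.lhs = .app f ts ∧ f ∉ R.Val := by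
  rcases h with h | ⟨f, hf, rfl⟩
  · obtain ⟨⟨f, ts, hl, hf⟩, -⟩ := hwf.rule_lhs_cond h
    exact ⟨f, ts, hl, fun hv => hf.2 (hwf.val_subset_fth hv)⟩
  · exact ⟨f, _, rfl, hf.2⟩

lemma isLogical_cond_of_mem_Rrc (hwf : R.WF) {ρ : Rule F} (h : ρ ∈ R.Rrc) :
    IsLogical R.Fth ρ.cond := by
  rcases h with h | ⟨f, hf, rfl⟩
  · exact (hwf.rule_lhs_cond h).2
  · refine .app hwf.eqS_mem_fth ?_
    simp only [List.mem_cons, List.not_mem_nil, or_false]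
    rintro t (rfl | rfl)
    · exact .var _
    · exact .app hf.1 fun u hu => by
        obtain ⟨x, -, rfl⟩ := List.mem_map.1 hu
        exact .var x

lemma isLogical_cond_of_isVariantR (hwf : R.WF) {ρ ρ' : Rule F} (hρ' : ρ' ∈ R.Rrc)
    (h : IsVariantR ρ' ρ) : IsLogical R.Fth ρ.cond := by
  obtain ⟨π, -, -, hc⟩ := h
  rw [hc]
  exact isLogical_subst (isLogical_cond_of_mem_Rrc hwf hρ') fun x _ => .var _

lemma mem_vars_calcRule_cond {f : F} {x : ℕ} :
    x ∈ (R.calcRule f).cond.vars ↔ x ≤ R.arity f := by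
  simp only [calcRule, Term.mem_vars_app, List.mem_cons, List.not_mem_nil, or_false,
    exists_eq_or_imp, exists_eq_left, List.mem_map, List.mem_range]
  constructor
  · rintro (h | ⟨_, ⟨y, hy, rfl⟩, h⟩) <;> simp at h <;> omega
  · intro hx
    rcases hx.lt_or_eq with hx | rfl
    · exact .inr ⟨_, ⟨x, hx, rfl⟩, by simp⟩
    · exact .inl (by simp)

lemma mem_LVar_calcRule {f : F} {x : ℕ} : x ∈ LVar (R.calcRule f) ↔ x ≤ R.arity f := by
  refine ⟨fun hx => ?_, fun hx => .inl (mem_vars_calcRule_cond.2 hx)⟩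
  rcases hx with hx | ⟨hx, -⟩
  · exact mem_vars_calcRule_cond.1 hx
  · simp [calcRule] at hx; omega

lemma exists_calcRule_subst (hwf : R.WF) {f : F} (hf : f ∈ R.Fth \ R.Val) {vs : List F}
    (hlen : vs.length = R.arity f) (hvs : ∀ v ∈ vs, v ∈ R.Val) :
    ∃ τ : ℕ → Term F, (∀ x ∈ LVar (R.calcRule f), R.isVal (τ x)) ∧
      (∀ x, x ∉ LVar (R.calcRule f) → τ x = .var x) ∧
      R.validC ((R.calcRule f).cond.subst τ) ∧
      (R.calcRule f).lhs.subst τ = .app f (vs.map fun v => .app v []) ∧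
      (R.calcRule f).rhs.subst τ = .app (R.J (.app f (vs.map fun v => .app v []))) [] := by
  set b : Term F := .app f (vs.map fun v => .app v [])
  set τ : ℕ → Term F := fun x =>
    if h : x < vs.length then .app vs[x] [] else if x = vs.length then .app (R.J b) [] else .var x
  have hlhs : (R.calcRule f).lhs.subst τ = b := by
    simp only [calcRule, Term.subst_app, List.map_map, b, ← hlen]
    congr 1
    refine List.ext_getElem (by simp) fun i h1 _ => ?_
    have hi : i < vs.length := by simpa using h1
    simp [τ, hi]
  have hrhs : (R.calcRule f).rhs.subst τ = .app (R.J b) [] := by simp [calcRule, τ, hlen]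
  have hτval : ∀ x ∈ LVar (R.calcRule f), R.isVal (τ x) := by
    intro x hx
    rw [mem_LVar_calcRule, ← hlen] at hx
    by_cases h : x < vs.length
    · exact ⟨vs[x], hvs _ (List.getElem_mem h), by simp [τ, h]⟩
    · exact ⟨R.J b, hwf.J_mem_val b, by simp [τ, show x = vs.length by omega]⟩
  have hb : IsLogical R.Fth b ∧ b.vars = ∅ := by
    refine ⟨.app hf.1 fun u hu => ?_, ?_⟩
    · obtain ⟨v, hv, rfl⟩ := List.mem_map.1 hu
      exact isLogical_of_isVal hwf ⟨v, hvs v hv, rfl⟩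
    · ext x
      simp [b, Term.vars, Term.varsList]
  have hJb : R.isVal (.app (R.J b) []) := ⟨_, hwf.J_mem_val b, rfl⟩
  refine ⟨τ, hτval, fun x hx => ?_, ?_, hlhs, hrhs⟩
  · rw [mem_LVar_calcRule, ← hlen, not_le] at hx
    simp [τ, hx.not_gt, hx.ne']
  · have hcond : (R.calcRule f).cond.subst τ = .app R.eqS [.app (R.J b) [], b] := by
      have : (R.calcRule f).cond.subst τ
          = .app R.eqS [(R.calcRule f).rhs.subst τ, (R.calcRule f).lhs.subst τ] := by
        simp [calcRule]
      rw [this, hlhs, hrhs]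
    have hg : (Term.app R.eqS [.app (R.J b) [], b]).vars = ∅ := by
      ext x; simp [Term.mem_vars_app, vars_eq_empty_of_isVal hJb, hb.2]
    rw [hcond]
    refine validC_of_vars_eq_empty hg ((hwf.J_eq (isLogical_of_isVal hwf hJb) hb.1
      (ground_iff_vars_eq_empty.2 (vars_eq_empty_of_isVal hJb))
      (ground_iff_vars_eq_empty.2 hb.2)).2 (hwf.J_val (hwf.J_mem_val b)))

end LCTRS

/-! ### Rules of `R̄` as value instances -/

/-- A rule `ℓμ → rμ` of `R̄` presented through its origin: `μ` instantiates the logical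
variables of a rule of `R_rc` by values satisfying its constraint, and renames the other
variables by `π`. -/
structure ValueInstance {F : Type} (R : LCTRS F) where
  rule : Rule F
  μ : ℕ → Term F
  π : ℕ ≃ ℕ
  mem_Rrc : rule ∈ R.Rrc
  isVal_of_mem_LVar : ∀ x ∈ LVar rule, R.isVal (μ x)
  eq_var_of_not_mem_LVar : ∀ x, x ∉ LVar rule → μ x = .var (π x)
  validC : R.validC (rule.cond.subst μ)

namespace ValueInstance

variable {F : Type} {R : LCTRS F}

def lhs (L : ValueInstance R) : Term F := L.rule.lhs.subst L.μ

def rhs (L : ValueInstance R) : Term F := L.rule.rhs.subst L.μ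

lemma exists_of_subst {ρ : Rule F} (hρ : ρ ∈ R.Rrc) {τ : ℕ → Term F}
    (hval : ∀ x ∈ LVar ρ, R.isVal (τ x)) (hvar : ∀ x, x ∉ LVar ρ → τ x = .var x)
    (hvalid : R.validC (ρ.cond.subst τ)) (π : ℕ ≃ ℕ) :
    ∃ L : ValueInstance R, L.lhs = (ρ.lhs.subst τ).rename π ∧
      L.rhs = (ρ.rhs.subst τ).rename π := by
  have hμ : ∀ x ∈ LVar ρ, (τ x).rename π = τ x := fun x hx =>
    LCTRS.subst_eq_self_of_isVal (hval x hx) _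
  refine ⟨⟨ρ, fun x => (τ x).rename π, π, hρ, fun x hx => (hμ x hx).symm ▸ hval x hx,
    fun x hx => by simp [hvar x hx, Term.rename], ?_⟩,
    (Term.subst_subst _ _ _).symm, (Term.subst_subst _ _ _).symm⟩
  rwa [Term.subst_congr fun x hx => hμ x (cond_vars_subset_LVar ρ hx)]

lemma exists_of_mem_barTRS (hwf : R.WF) {lr lr' : Term F × Term F} (h : lr' ∈ barTRS R)
    (hv : IsVariantP lr' lr) : ∃ L : ValueInstance R, lr = (L.lhs, L.rhs) := by
  obtain ⟨π, h1, h2⟩ := hv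
  obtain ⟨ρ, hρ, τ, hval, hvar, hvalid, hlr⟩ : ∃ ρ ∈ R.Rrc, ∃ τ : ℕ → Term F,
      (∀ x ∈ LVar ρ, R.isVal (τ x)) ∧ (∀ x, x ∉ LVar ρ → τ x = .var x) ∧
      R.validC (ρ.cond.subst τ) ∧ lr' = (ρ.lhs.subst τ, ρ.rhs.subst τ) := by
    rcases h with ⟨ρ, hρ, τ, hdom, hval, hvalid, rfl⟩ | ⟨f, hf, vs, hlen, hvs, rfl⟩
    · refine ⟨ρ, .inl hρ, τ, hval, fun x hx => ?_, hvalid, rfl⟩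
      by_contra hne
      exact hx (hdom ▸ hne)
    · obtain ⟨τ, hval, hvar, hvalid, hl, hr⟩ := LCTRS.exists_calcRule_subst hwf hf hlen hvs
      exact ⟨_, .inr ⟨f, hf, rfl⟩, τ, hval, hvar, hvalid, by rw [hl, hr]⟩
  obtain ⟨L, hl, hr⟩ := exists_of_subst hρ hval hvar hvalid π
  exact ⟨L, Prod.ext (by rw [h1, hl, hlr]) (by rw [h2, hr, hlr])⟩

lemma isVal_or_eq_var (L : ValueInstance R) (x : ℕ) :
    R.isVal (L.μ x) ∨ L.μ x = .var (L.π x) := by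
  by_cases hx : x ∈ LVar L.rule
  · exact .inl (L.isVal_of_mem_LVar x hx)
  · exact .inr (L.eq_var_of_not_mem_LVar x hx)

lemma subtermAt_μ_cons (L : ValueInstance R) (x i : ℕ) (q : List ℕ) :
    (L.μ x).subtermAt (i :: q) = none := by
  rcases L.isVal_or_eq_var x with ⟨v, -, hv⟩ | hv <;> simp [hv, Term.subtermAt]

/-- The left-hand side of a rule of `R_rc` is rooted by a non-value symbol. -/
lemma not_isVal_of_unifies (hwf : R.WF) (L : ValueInstance R) {σ : ℕ → Term F} {u : Term F}
    (h : Unifies σ L.lhs u) : ¬ R.isVal u := by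
  rintro ⟨v, hv, rfl⟩
  obtain ⟨f, ts, hfts, hf⟩ := LCTRS.exists_root_of_mem_Rrc hwf L.mem_Rrc
  simp only [Unifies, lhs, hfts, Term.subst_app, Term.app.injEq] at h
  exact hf (h.1 ▸ hv)

lemma exists_funPos (L : ValueInstance R) {p : List ℕ} {u : Term F}
    (hu : L.lhs.subtermAt p = some u) (hfun : u.isFun) (hnv : ¬ R.isVal u) :
    ∃ w, L.rule.lhs.subtermAt p = some w ∧ w.isFun ∧ u = w.subst L.μ := by
  rcases Term.subtermAt_subst_cases hu with ⟨w, hw, rfl⟩ | ⟨x, q, p', -, hp', -, hx⟩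
  · refine ⟨w, hw, ?_, rfl⟩
    cases w with
    | app f ts => trivial
    | var x =>
        rcases L.isVal_or_eq_var x with hv | hv
        · exact (hnv (by simpa using hv)).elim
        · simp [hv, Term.isFun] at hfun
  · obtain ⟨i, q', rfl⟩ := List.exists_cons_of_ne_nil hp'
    simp [subtermAt_μ_cons] at hx

lemma μ_eq_of_unifies {L L' : ValueInstance R} {κ : ℕ ≃ ℕ}
    (hκ : L.rule = ruleRename κ L'.rule)
    {σ : ℕ → Term F} (hunif : Unifies σ L'.lhs L.lhs) {x : ℕ} (hx : x ∈ L'.rule.lhs.vars)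
    (hxL : x ∈ LVar L'.rule) : L'.μ x = L.μ (κ x) := by
  have hκx : κ x ∈ LVar L.rule := hκ ▸ mem_LVar_ruleRename.2 ⟨x, hxL, rfl⟩
  have h := Term.eqOn_vars_of_subst_eq (t := L'.rule.lhs)
    (a := fun y => (L'.μ y).subst σ) (b := fun y => (L.μ (κ y)).subst σ) (by
      simpa [Unifies, lhs, hκ, ruleRename, Term.subst_subst, Term.rename_subst,
        Function.comp_def] using hunif) x hx
  rwa [LCTRS.subst_eq_self_of_isVal (L'.isVal_of_mem_LVar x hxL),
    LCTRS.subst_eq_self_of_isVal (L.isVal_of_mem_LVar _ hκx)] at h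

lemma isVariantP_of_unifies {L L' : ValueInstance R} {κ : ℕ ≃ ℕ}
    (hκ : L.rule = ruleRename κ L'.rule) (hsub : L.rule.rhs.vars ⊆ L.rule.lhs.vars)
    {σ : ℕ → Term F} (hunif : Unifies σ L'.lhs L.lhs) :
    IsVariantP (L'.lhs, L'.rhs) (L.lhs, L.rhs) := by
  set P : ℕ ≃ ℕ := L'.π.symm.trans (κ.trans L.π)
  have hP : ∀ x, x ∈ L'.rule.lhs.vars → (L'.μ x).rename P = L.μ (κ x) := by
    intro x hx
    by_cases hxL : x ∈ LVar L'.rule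
    · rw [Term.rename, LCTRS.subst_eq_self_of_isVal (L'.isVal_of_mem_LVar x hxL)]
      exact μ_eq_of_unifies hκ hunif hx hxL
    · have hκx : κ x ∉ LVar L.rule := fun h => hxL (by
        obtain ⟨y, hy, hyx⟩ := mem_LVar_ruleRename.1 (hκ ▸ h)
        rwa [← κ.injective hyx])
      simp [L'.eq_var_of_not_mem_LVar x hxL, L.eq_var_of_not_mem_LVar _ hκx, Term.rename, P]
  have hrl : L'.rule.rhs.vars ⊆ L'.rule.lhs.vars := by
    refine rhs_vars_subset_of_ruleRename (π := κ) ?_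
    rwa [← hκ]
  refine ⟨P, ?_, ?_⟩ <;> simp only [lhs, rhs, hκ, ruleRename, Term.rename, Term.subst_subst]
  · exact Term.subst_congr fun x hx => by simpa [Term.rename] using (hP x hx).symm
  · exact Term.subst_congr fun x hx => by simpa [Term.rename] using (hP x (hrl hx)).symm

end ValueInstance

/-! ### Constrained parallel overlaps -/

section Overlap

variable {F : Type} {R : LCTRS F}

/-- The data of a constrained parallel critical pair that do not depend on the unifier:
the rule `ρ` and the rules `ρ_p` overlapping it at the parallel positions `p`. -/
structure IsParallelOverlap (R : LCTRS F) (ρ : Rule F) (prs : List (List ℕ × Rule F)) :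
    Prop where
  ne_nil : prs.map (·.1) ≠ []
  pairwise_parallel : (prs.map (·.1)).Pairwise ParallelPos
  variant : ∃ ρ' ∈ R.Rrc, IsVariantR ρ' ρ
  variant_of_mem : ∀ pr ∈ prs, ∃ ρ' ∈ R.Rrc, IsVariantR ρ' pr.2
  pairwise_disjoint : prs.Pairwise fun a b => ruleVars a.2 ∩ ruleVars b.2 = ∅
  disjoint_of_mem : ∀ pr ∈ prs, ruleVars ρ ∩ ruleVars pr.2 = ∅
  isFun_of_mem : ∀ pr ∈ prs, ∃ u, ρ.lhs.subtermAt pr.1 = some u ∧ u.isFun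
  root : ∀ ρε, prs = [([], ρε)] → ¬ IsVariantR ρε ρ ∨ ¬ ρ.rhs.vars ⊆ ρ.lhs.vars

structure IsValueUnifier (R : LCTRS F) (ρ : Rule F) (prs : List (List ℕ × Rule F))
    (θ : ℕ → Term F) : Prop where
  unifies : ∀ pr ∈ prs, ∀ u, ρ.lhs.subtermAt pr.1 = some u → Unifies θ pr.2.lhs u
  isVal : ∀ x, (x ∈ LVar ρ ∨ ∃ pr ∈ prs, x ∈ LVar pr.2) → R.isVal (θ x)
  validC : R.validC (ρ.cond.subst θ)
  validC_of_mem : ∀ pr ∈ prs, R.validC (pr.2.cond.subst θ)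

def overlapEqns (ρ : Rule F) (prs : List (List ℕ × Rule F)) : List (Term F × Term F) :=
  prs.filterMap fun pr => (ρ.lhs.subtermAt pr.1).map (pr.2.lhs, ·)

lemma unifiesE_overlapEqns {ρ : Rule F} {prs : List (List ℕ × Rule F)} {θ : ℕ → Term F} :
    UnifiesE θ (overlapEqns ρ prs) ↔
      ∀ pr ∈ prs, ∀ u, ρ.lhs.subtermAt pr.1 = some u → Unifies θ pr.2.lhs u := by
  simp only [UnifiesE, overlapEqns, List.mem_filterMap, Option.map_eq_some_iff, Unifies]
  constructor
  · exact fun h pr hpr u hu => h _ ⟨pr, hpr, u, hu, rfl⟩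
  · rintro h _ ⟨pr, hpr, u, hu, rfl⟩
    exact h pr hpr u hu

variable (R) in
def condsConj (prs : List (List ℕ × Rule F)) : Term F := R.bigConj (prs.map fun pr => pr.2.cond)

variable (R) in
def ECsConj (ρ : Rule F) (prs : List (List ℕ × Rule F)) : Term F :=
  R.conj (R.EC ρ) (R.bigConj (prs.map fun pr => R.EC pr.2))

lemma condsConj_subst (prs : List (List ℕ × Rule F)) (σ : ℕ → Term F) :
    (condsConj R prs).subst σ = R.bigConj (prs.map fun pr => pr.2.cond.subst σ) := by
  simp [condsConj, LCTRS.subst_bigConj, List.map_map, Function.comp_def]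

namespace IsValueUnifier

variable {ρ : Rule F} {prs : List (List ℕ × Rule F)} {θ : ℕ → Term F}

lemma isVal_of_mem_vars_condsConj (hθ : IsValueUnifier R ρ prs θ) {x : ℕ}
    (hx : x ∈ (condsConj R prs).vars) : R.isVal (θ x) := by
  simp only [condsConj, LCTRS.mem_vars_bigConj, List.mem_map] at hx
  obtain ⟨-, ⟨pr, hpr, rfl⟩, hx⟩ := hx
  exact hθ.isVal x (.inr ⟨pr, hpr, cond_vars_subset_LVar _ hx⟩)

lemma isVal_of_mem_vars_ECsConj (hθ : IsValueUnifier R ρ prs θ) {x : ℕ}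
    (hx : x ∈ (ECsConj R ρ prs).vars) : R.isVal (θ x) := by
  simp only [ECsConj, LCTRS.mem_vars_conj, LCTRS.mem_vars_bigConj, List.mem_map] at hx
  rcases hx with hx | ⟨-, ⟨pr, hpr, rfl⟩, hx⟩
  · exact hθ.isVal x (.inl (mem_LVar_of_mem_EVarList (LCTRS.mem_EVarList_of_mem_vars_EC hx)))
  · exact hθ.isVal x
      (.inr ⟨pr, hpr, mem_LVar_of_mem_EVarList (LCTRS.mem_EVarList_of_mem_vars_EC hx)⟩)

lemma groundTrue_cond (hwf : R.WF) (hov : IsParallelOverlap R ρ prs)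
    (hθ : IsValueUnifier R ρ prs θ) : R.GroundTrue (ρ.cond.subst θ) := by
  obtain ⟨ρ', hρ', hv⟩ := hov.variant
  exact .subst_of_validC hwf (LCTRS.isLogical_cond_of_isVariantR hwf hρ' hv)
    (fun x hx => hθ.isVal x (.inl (cond_vars_subset_LVar ρ hx))) hθ.validC

lemma groundTrue_condsConj (hwf : R.WF) (hov : IsParallelOverlap R ρ prs)
    (hθ : IsValueUnifier R ρ prs θ) : R.GroundTrue ((condsConj R prs).subst θ) := by
  rw [condsConj_subst]
  refine .bigConj hwf fun a ha => ?_
  obtain ⟨pr, hpr, rfl⟩ := List.mem_map.1 ha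
  obtain ⟨ρ', hρ', hv⟩ := hov.variant_of_mem pr hpr
  exact .subst_of_validC hwf (LCTRS.isLogical_cond_of_isVariantR hwf hρ' hv)
    (fun x hx => hθ.isVal x (.inr ⟨pr, hpr, cond_vars_subset_LVar _ hx⟩))
    (hθ.validC_of_mem pr hpr)

lemma groundTrue_ECsConj (hwf : R.WF) (hθ : IsValueUnifier R ρ prs θ) :
    R.GroundTrue ((ECsConj R ρ prs).subst θ) := by
  rw [ECsConj, LCTRS.subst_conj, LCTRS.subst_bigConj, List.map_map]
  refine .conj hwf (.EC_subst hwf fun x hx => hθ.isVal x (.inl hx)) (.bigConj hwf ?_)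
  intro a ha
  obtain ⟨pr, hpr, rfl⟩ := List.mem_map.1 ha
  exact .EC_subst hwf fun x hx => hθ.isVal x (.inr ⟨pr, hpr, hx⟩)

end IsValueUnifier

lemma respectsC_and_satC_subst_of_groundTrue {Ψ : Term F} {σ δ θ : ℕ → Term F}
    (hσδ : ∀ x, (σ x).subst δ = θ x) (hval : ∀ x ∈ Ψ.vars, R.isVal (θ x))
    (htrue : R.GroundTrue (Ψ.subst θ)) :
    R.respectsC δ (Ψ.subst σ) ∧ R.satC (Ψ.subst σ) := by
  have hθ := Term.subst_subst_of_forall hσδ Ψ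
  have hvalδ : R.valAssign (Ψ.subst σ).vars δ := fun y hy => by
    obtain ⟨x, hx, hyx⟩ := Term.mem_vars_subst.1 hy
    exact LCTRS.isVal_of_mem_vars_subst (hσδ x ▸ hval x hx) hyx
  exact ⟨⟨hvalδ, hθ ▸ LCTRS.validC_of_vars_eq_empty htrue.2.1 htrue.2.2⟩,
    ⟨δ, hvalδ, hθ ▸ htrue.2.2⟩⟩

lemma IsValueUnifier.respectsC_and_satC (hwf : R.WF) {ρ : Rule F}
    {prs : List (List ℕ × Rule F)} {σ δ θ : ℕ → Term F} (hov : IsParallelOverlap R ρ prs)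
    (hθ : IsValueUnifier R ρ prs θ) (hσδ : ∀ x, (σ x).subst δ = θ x) :
    R.respectsC δ (R.conj (ρ.cond.subst σ) (R.conj ((ECsConj R ρ prs).subst σ)
      (R.bigConj (prs.map fun pr => pr.2.cond.subst σ)))) ∧
    R.satC (R.conj (ρ.cond.subst σ) (R.bigConj (prs.map fun pr => pr.2.cond.subst σ))) := by
  have hconds := hθ.groundTrue_condsConj hwf hov
  have hcond := hθ.groundTrue_cond hwf hov
  have hresp := respectsC_and_satC_subst_of_groundTrue (Ψ := R.conj ρ.cond
      (R.conj (ECsConj R ρ prs) (condsConj R prs))) hσδ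
    (by simp only [LCTRS.mem_vars_conj]
        rintro x (hx | hx | hx)
        exacts [hθ.isVal x (.inl (cond_vars_subset_LVar ρ hx)),
          hθ.isVal_of_mem_vars_ECsConj hx, hθ.isVal_of_mem_vars_condsConj hx])
    (by simp only [LCTRS.subst_conj]
        exact .conj hwf hcond (.conj hwf (hθ.groundTrue_ECsConj hwf) hconds))
  have hsat := respectsC_and_satC_subst_of_groundTrue (Ψ := R.conj ρ.cond (condsConj R prs)) hσδ
    (by simp only [LCTRS.mem_vars_conj]
        rintro x (hx | hx)
        exacts [hθ.isVal x (.inl (cond_vars_subset_LVar ρ hx)),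
          hθ.isVal_of_mem_vars_condsConj hx])
    (by rw [LCTRS.subst_conj]; exact .conj hwf hcond hconds)
  rw [LCTRS.subst_conj, LCTRS.subst_conj, condsConj_subst] at hresp
  rw [LCTRS.subst_conj, condsConj_subst] at hsat
  exact ⟨hresp.1, hsat.2⟩

theorem IsParallelOverlap.exists_isCPCP (hwf : R.WF) {ρ : Rule F}
    {prs : List (List ℕ × Rule F)} {θ : ℕ → Term F} (hov : IsParallelOverlap R ρ prs)
    (hθ : IsValueUnifier R ρ prs θ) :
    ∃ (σ δ : ℕ → Term F) (s' Φ : Term F),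
      IsCPCP R (prs.map (·.1)) (ρ.lhs.subst σ) s' (ρ.rhs.subst σ) Φ ∧
      (∀ x, (σ x).subst δ = θ x) ∧
      replaceAll (ρ.lhs.subst σ) (prs.map fun pr => (pr.1, pr.2.rhs.subst σ)) = some s' ∧
      R.respectsC δ Φ := by
  have hunif := unifiesE_overlapEqns.2 hθ.unifies
  obtain ⟨σ, hσ, hσmg⟩ := exists_isMGUE _ ⟨θ, hunif⟩
  obtain ⟨δ, hσδ⟩ := hσmg θ hunif
  obtain ⟨s', hs'⟩ := exists_replaceAll_eq_some (t := ρ.lhs.subst σ)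
    (l := prs.map fun pr => (pr.1, pr.2.rhs.subst σ)) (by
      simp only [List.mem_map]
      rintro _ ⟨pr, hpr, rfl⟩
      obtain ⟨u, hu, -⟩ := hov.isFun_of_mem pr hpr
      exact ⟨_, Term.subtermAt_subst hu σ⟩)
    (by simpa [List.map_map, Function.comp_def] using hov.pairwise_parallel)
  obtain ⟨hresp, hsat⟩ := hθ.respectsC_and_satC hwf hov hσδ
  refine ⟨σ, δ, s', _, ⟨ρ, prs, σ, rfl, hov.ne_nil, hov.pairwise_parallel, hov.variant,
    hov.variant_of_mem, hov.pairwise_disjoint, hov.disjoint_of_mem, hov.isFun_of_mem,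
    unifiesE_overlapEqns.1 hσ, fun θ' h => hσmg θ' (unifiesE_overlapEqns.2 h),
    fun x hx => LCTRS.isVal_or_var_of_isVal_subst ((hσδ x).symm ▸ hθ.isVal x hx),
    hsat, hov.root, rfl, hs', rfl, rfl⟩, hσδ, hs', hresp⟩

end Overlap

/-! ### Lifting parallel critical pairs of `R̄` -/

lemma exists_perm_eqOn {α : Type*} {f : α → α} (hf : Function.Injective f) {S : Set α}
    (hS : S.Finite) : ∃ π : Equiv.Perm α, ∀ x ∈ S, π x = f x := by
  classical
  have : Finite {x | x ∈ S} := hS.to_subtype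
  exact ⟨(Equiv.Set.image f S hf).extendSubtype, fun x hx => by
    rw [Equiv.extendSubtype_apply_of_mem _ _ hx]; rfl⟩

/-- The variable `x` of the `i`-th block is sent to `Nat.pair (encode i) x`. -/
lemma exists_renameApart {F : Type} {ι : Type*} [Encodable ι] (V : ι → Set ℕ)
    (hV : ∀ i, (V i).Finite) (ν : ι → ℕ → Term F) : ∃ (ren : ι → ℕ ≃ ℕ) (θ : ℕ → Term F),
      (∀ i j, ∀ x ∈ V i, ∀ y ∈ V j, ren i x = ren j y → i = j) ∧
      ∀ i, ∀ x ∈ V i, θ (ren i x) = ν i x := by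
  have hinj : ∀ i : ι, Function.Injective (Nat.pair (Encodable.encode i)) := fun i x y h => by
    simpa using congrArg (fun n => (Nat.unpair n).2) h
  choose ren hren using fun i => exists_perm_eqOn (hinj i) (hV i)
  refine ⟨ren, fun n => ((Encodable.decode (α := ι) n.unpair.1).map (ν · n.unpair.2)).getD (.var n),
    fun i j x hx y hy h => ?_, fun i x hx => ?_⟩
  · rw [hren i x hx, hren j y hy] at h
    exact Encodable.encode_injective (by simpa using congrArg (fun n => (Nat.unpair n).1) h)
  · simp [hren i x hx]

section LiftedRule

variable {F : Type} {R : LCTRS F} {k : ℕ} (L : Option (Fin k) → ValueInstance R)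
  (ren : Option (Fin k) → ℕ ≃ ℕ)

/-- `none` indexes the outer rule of the overlap, `some j` the `j`-th inner one. -/
def liftedRule (i : Option (Fin k)) : Rule F := ruleRename (ren i) (L i).rule

def liftedOverlaps (P : Fin k → List ℕ) : List (List ℕ × Rule F) :=
  List.ofFn fun j => (P j, liftedRule L ren (some j))

variable {L ren} {σT θ : ℕ → Term F}
  (hθ : ∀ i, ∀ x ∈ ruleVars (L i).rule, θ (ren i x) = ((L i).μ x).subst σT)
include hθ

lemma rename_subst_of_subset_ruleVars {i : Option (Fin k)} {u : Term F}
    (hu : u.vars ⊆ ruleVars (L i).rule) :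
    (u.rename (ren i)).subst θ = (u.subst (L i).μ).subst σT := by
  rw [Term.rename_subst, Term.subst_subst]
  exact Term.subst_congr fun x hx => hθ i x (hu hx)

lemma liftedRule_lhs_subst (i : Option (Fin k)) :
    (liftedRule L ren i).lhs.subst θ = (L i).lhs.subst σT :=
  rename_subst_of_subset_ruleVars hθ (lhs_vars_subset_ruleVars _)

lemma liftedRule_rhs_subst (i : Option (Fin k)) :
    (liftedRule L ren i).rhs.subst θ = (L i).rhs.subst σT :=
  rename_subst_of_subset_ruleVars hθ (rhs_vars_subset_ruleVars _)

lemma isVal_of_mem_LVar_liftedRule {i : Option (Fin k)} {x : ℕ}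
    (hx : x ∈ LVar (liftedRule L ren i)) : R.isVal (θ x) := by
  obtain ⟨y, hy, rfl⟩ := mem_LVar_ruleRename.1 hx
  rw [hθ i y (LVar_subset_ruleVars _ hy)]
  exact (LCTRS.subst_eq_self_of_isVal ((L i).isVal_of_mem_LVar y hy) σT).symm ▸
    (L i).isVal_of_mem_LVar y hy

lemma validC_liftedRule_cond (i : Option (Fin k)) :
    R.validC ((liftedRule L ren i).cond.subst θ) := by
  have hval : ∀ x ∈ (L i).rule.cond.vars, R.isVal ((L i).μ x) := fun x hx =>
    (L i).isVal_of_mem_LVar x (cond_vars_subset_LVar _ hx)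
  rw [liftedRule, ruleRename, rename_subst_of_subset_ruleVars hθ fun _ hx => .inr hx,
    Term.subst_eq_self_of_vars_eq_empty
      (Term.vars_subst_eq_empty fun x hx => LCTRS.vars_eq_empty_of_isVal (hval x hx))]
  exact (L i).validC

end LiftedRule

section Lift

variable {F : Type} {R : LCTRS F} {k : ℕ} {L : Option (Fin k) → ValueInstance R}
  {ren : Option (Fin k) → ℕ ≃ ℕ} {P : Fin k → List ℕ}

lemma ruleVars_liftedRule_inter
    (hdisj : ∀ i j, ∀ x ∈ ruleVars (L i).rule, ∀ y ∈ ruleVars (L j).rule,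
      ren i x = ren j y → i = j)
    {i j : Option (Fin k)} (hij : i ≠ j) :
    ruleVars (liftedRule L ren i) ∩ ruleVars (liftedRule L ren j) = ∅ := by
  ext z
  simp only [liftedRule, Set.mem_inter_iff, mem_ruleVars_ruleRename, Set.mem_empty_iff_false,
    iff_false, not_and, not_exists]
  rintro ⟨x, hx, rfl⟩ y hy hyx
  exact hij (hdisj i j x hx y hy hyx.symm)

lemma liftedOverlaps_map_fst : (liftedOverlaps L ren P).map (·.1) = List.ofFn P := by
  simp [liftedOverlaps, List.map_ofFn, Function.comp_def]

lemma exists_of_mem_liftedOverlaps {pr : List ℕ × Rule F} (h : pr ∈ liftedOverlaps L ren P) :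
    ∃ j, pr = (P j, liftedRule L ren (some j)) := by
  obtain ⟨j, rfl⟩ := List.mem_ofFn.1 h
  exact ⟨j, rfl⟩

lemma exists_funPos_of_unifies (hwf : R.WF) {σT : ℕ → Term F}
    (hfun : ∀ j, ∃ u, (L none).lhs.subtermAt (P j) = some u ∧ u.isFun)
    (hunif : ∀ j u, (L none).lhs.subtermAt (P j) = some u → Unifies σT (L (some j)).lhs u)
    (j : Fin k) : ∃ w, (L none).rule.lhs.subtermAt (P j) = some w ∧ w.isFun ∧
      (L none).lhs.subtermAt (P j) = some (w.subst (L none).μ) := by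
  obtain ⟨u, hu, hufun⟩ := hfun j
  obtain ⟨w, hw, hwfun, rfl⟩ := (L none).exists_funPos hu hufun
    ((L (some j)).not_isVal_of_unifies hwf (hunif j u hu))
  exact ⟨w, hw, hwfun, hu⟩

lemma isValueUnifier_lifted (hwf : R.WF) {σT θ : ℕ → Term F}
    (hθ : ∀ i, ∀ x ∈ ruleVars (L i).rule, θ (ren i x) = ((L i).μ x).subst σT)
    (hfun : ∀ j, ∃ u, (L none).lhs.subtermAt (P j) = some u ∧ u.isFun)
    (hunif : ∀ j u, (L none).lhs.subtermAt (P j) = some u → Unifies σT (L (some j)).lhs u) :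
    IsValueUnifier R (liftedRule L ren none) (liftedOverlaps L ren P) θ := by
  refine ⟨fun pr hpr u hu => ?_, ?_, validC_liftedRule_cond hθ none, fun pr hpr => ?_⟩
  · obtain ⟨j, rfl⟩ := exists_of_mem_liftedOverlaps hpr
    obtain ⟨w, hw, -, hwl⟩ := exists_funPos_of_unifies hwf hfun hunif j
    obtain rfl : u = w.rename (ren none) :=
      Option.some.inj (hu.symm.trans (Term.subtermAt_subst hw _))
    rw [Unifies, liftedRule_lhs_subst hθ, rename_subst_of_subset_ruleVars hθ
      ((Term.vars_subset_of_subtermAt hw).trans (lhs_vars_subset_ruleVars _))]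
    exact hunif j _ hwl
  · rintro x (hx | ⟨pr, hpr, hx⟩)
    · exact isVal_of_mem_LVar_liftedRule hθ hx
    · obtain ⟨j, rfl⟩ := exists_of_mem_liftedOverlaps hpr
      exact isVal_of_mem_LVar_liftedRule hθ hx
  · obtain ⟨j, rfl⟩ := exists_of_mem_liftedOverlaps hpr
    exact validC_liftedRule_cond hθ (some j)

lemma root_liftedOverlaps {σT : ℕ → Term F}
    (hunif : ∀ j u, (L none).lhs.subtermAt (P j) = some u → Unifies σT (L (some j)).lhs u)
    (hroot : ∀ j, k = 1 → P j = [] →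
      ¬ IsVariantP ((L (some j)).lhs, (L (some j)).rhs) ((L none).lhs, (L none).rhs))
    (ρε : Rule F) (h : liftedOverlaps L ren P = [([], ρε)]) :
    ¬ IsVariantR ρε (liftedRule L ren none) ∨
      ¬ (liftedRule L ren none).rhs.vars ⊆ (liftedRule L ren none).lhs.vars := by
  have hk : k = 1 := by simpa [liftedOverlaps] using congrArg List.length h
  obtain ⟨j, hj⟩ := exists_of_mem_liftedOverlaps (h ▸ List.mem_singleton_self _ :
    ([], ρε) ∈ liftedOverlaps L ren P)
  obtain ⟨hPj, rfl⟩ := Prod.mk.inj hj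
  by_contra! hc
  obtain ⟨κ, hκ⟩ := hc.1.of_ruleRename
  exact hroot j hk hPj.symm ((L none).isVariantP_of_unifies hκ
    (rhs_vars_subset_of_ruleRename hc.2) (hunif j _ (by rw [← hPj, Term.subtermAt_nil])))

lemma isParallelOverlap_lifted (hwf : R.WF) {σT : ℕ → Term F}
    (hdisj : ∀ i j, ∀ x ∈ ruleVars (L i).rule, ∀ y ∈ ruleVars (L j).rule,
      ren i x = ren j y → i = j)
    (hne : List.ofFn P ≠ []) (hpar : (List.ofFn P).Pairwise ParallelPos)
    (hfun : ∀ j, ∃ u, (L none).lhs.subtermAt (P j) = some u ∧ u.isFun)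
    (hunif : ∀ j u, (L none).lhs.subtermAt (P j) = some u → Unifies σT (L (some j)).lhs u)
    (hroot : ∀ j, k = 1 → P j = [] →
      ¬ IsVariantP ((L (some j)).lhs, (L (some j)).rhs) ((L none).lhs, (L none).rhs)) :
    IsParallelOverlap R (liftedRule L ren none) (liftedOverlaps L ren P) := by
  have hvariant : ∀ i, ∃ ρ' ∈ R.Rrc, IsVariantR ρ' (liftedRule L ren i) := fun i =>
    ⟨_, (L i).mem_Rrc, isVariantR_ruleRename _ _⟩
  refine ⟨liftedOverlaps_map_fst ▸ hne, liftedOverlaps_map_fst ▸ hpar, hvariant none,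
    fun pr hpr => ?_, ?_, fun pr hpr => ?_, fun pr hpr => ?_, root_liftedOverlaps hunif hroot⟩
  · obtain ⟨j, rfl⟩ := exists_of_mem_liftedOverlaps hpr
    exact hvariant (some j)
  · exact List.pairwise_ofFn.2 fun i j hij =>
      ruleVars_liftedRule_inter hdisj (by simpa using hij.ne)
  · obtain ⟨j, rfl⟩ := exists_of_mem_liftedOverlaps hpr
    exact ruleVars_liftedRule_inter hdisj (by simp)
  · obtain ⟨j, rfl⟩ := exists_of_mem_liftedOverlaps hpr
    obtain ⟨w, hw, hwfun, -⟩ := exists_funPos_of_unifies hwf hfun hunif j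
    exact ⟨_, Term.subtermAt_subst hw _, Term.isFun_subst hwfun _⟩

theorem exists_isValueUnifier_of_isPCP (hwf : R.WF) {Ps : List (List ℕ)} {lsig s t : Term F}
    (h : IsPCP (barTRS R) Ps lsig s t) :
    ∃ ρ prs θ, IsParallelOverlap R ρ prs ∧ IsValueUnifier R ρ prs θ ∧
      Ps = prs.map (·.1) ∧ lsig = ρ.lhs.subst θ ∧
      replaceAll lsig (prs.map fun pr => (pr.1, pr.2.rhs.subst θ)) = some s ∧
      t = ρ.rhs.subst θ := by
  obtain ⟨l, r, prs, σT, rfl, hne, hpar, hmain, hrules, -, -, hfun, hunif, -, hroot, rfl, hs,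
    rfl⟩ := h
  have hlift : ∀ i : Option (Fin prs.length), ∃ L : ValueInstance R,
      i.elim (l, r) (fun j => (prs.get j).2) = (L.lhs, L.rhs) := by
    rintro (_ | j)
    · obtain ⟨lr, hlr, hv⟩ := hmain
      exact ValueInstance.exists_of_mem_barTRS hwf hlr hv
    · obtain ⟨lr, hlr, hv⟩ := hrules _ (List.get_mem prs j)
      exact ValueInstance.exists_of_mem_barTRS hwf hlr hv
  choose L hL using hlift
  obtain ⟨hl, hr⟩ := Prod.mk.inj (hL none)
  have hLj : ∀ j, (prs.get j).2 = ((L (some j)).lhs, (L (some j)).rhs) := fun j => hL (some j)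
  obtain ⟨ren, θ, hdisj, hθ⟩ := exists_renameApart (fun i => ruleVars (L i).rule)
    (fun i => ruleVars_finite _) (fun i x => ((L i).μ x).subst σT)
  set P : Fin prs.length → List ℕ := fun j => (prs.get j).1
  have hfun' : ∀ j, ∃ u, (L none).lhs.subtermAt (P j) = some u ∧ u.isFun := fun j =>
    hl ▸ hfun _ (List.get_mem prs j)
  have hunif' : ∀ j u, (L none).lhs.subtermAt (P j) = some u →
      Unifies σT (L (some j)).lhs u := fun j u hu => by
    simpa only [hLj] using hunif _ (List.get_mem prs j) u (hl ▸ hu)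
  have hroot' : ∀ j, prs.length = 1 → P j = [] →
      ¬ IsVariantP ((L (some j)).lhs, (L (some j)).rhs) ((L none).lhs, (L none).rhs) := by
    intro j hk hPj
    obtain ⟨a, rfl⟩ := List.length_eq_one_iff.1 hk
    obtain rfl : j = ⟨0, by simp⟩ := Fin.ext (Nat.lt_one_iff.1 (by simp))
    rw [← hl, ← hr, ← hLj]
    exact hroot _ _ (congrArg ([·]) (Prod.ext (by simpa [P] using hPj) rfl))
  have hmap : ∀ {β : Type} (f : List ℕ × Term F × Term F → β),
      prs.map f = List.ofFn fun j => f (prs.get j) := fun f => List.ext_get (by simp) (by simp)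
  have hPs : prs.map (·.1) = List.ofFn P := hmap _
  refine ⟨liftedRule L ren none, liftedOverlaps L ren P, θ,
    isParallelOverlap_lifted hwf hdisj (hPs ▸ hne) (hPs ▸ hpar) hfun' hunif' hroot',
    isValueUnifier_lifted hwf hθ hfun' hunif', by rw [liftedOverlaps_map_fst, hPs],
    by rw [liftedRule_lhs_subst hθ, hl], ?_, by rw [liftedRule_rhs_subst hθ, hr]⟩
  convert hs using 2
  simp only [liftedOverlaps, List.map_ofFn, hmap, Function.comp_def,
    liftedRule_rhs_subst hθ, hLj, P]

end Lift

/-- For every parallel critical pair `s ≈ t` of the transformed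
TRS `R̄` there exist a constrained parallel critical pair `s′ ≈ t′ [φ′]` of the
LCTRS `R` and a substitution `γ` such that `s = s′γ`, `t = t′γ` and `γ ⊨ φ′`. -/
theorem pcp_of_barTRS_from_cpcp {F : Type} (R : LCTRS F) (hwf : R.WF) :
    ∀ (Ps : List (List ℕ)) (lsig s t : Term F), IsPCP (barTRS R) Ps lsig s t →
      ∃ (Ps' : List (List ℕ)) (lsig' s' t' φ' : Term F) (γ : ℕ → Term F),
        IsCPCP R Ps' lsig' s' t' φ' ∧ s = s'.subst γ ∧ t = t'.subst γ ∧
        R.respectsC γ φ' := by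
  intro Ps lsig s t hPCP
  obtain ⟨ρ, prs, θ, hov, hθ, rfl, rfl, hs, rfl⟩ := exists_isValueUnifier_of_isPCP hwf hPCP
  obtain ⟨σ, δ, s', Φ, hcpcp, hσδ, hs', hδ⟩ := hov.exists_isCPCP hwf hθ
  have hσδ' := Term.subst_subst_of_forall hσδ
  refine ⟨_, _, s', _, Φ, δ, hcpcp, ?_, (hσδ' _).symm, hδ⟩
  have hs'δ := replaceAll_subst hs' δ
  simp only [List.map_map, Function.comp_def, hσδ'] at hs'δ
  exact Option.some.inj (hs.symm.trans hs'δ)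

end LCT
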